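/- arXiv:1611.04649 — 8 statements merged into one kernel-verified Lean document; each statement's English description precedes it below -/
import Mathlib

section
/- Every countable, torsion-free, abelian group admits an injective additive group homomorphism into the additive group of the real numbers ℝ. -/
open TensorProduct

/-- Every countable, torsion-free, abelian group admits an injective
additive group homomorphism into the additive group of the real numbers. -/
theorem stmt7 (G : Type*) [AddCommGroup G] [Countable G]
    (htf : ∀ (n : ℤ) (g : G), n ≠ 0 → n • g = 0 → g = 0) :
    ∃ f : G →+ ℝ, Function.Injective f := by
  classical
  set V := ℚ ⊗[ℤ] G
  let f0 : G →ₗ[ℤ] V := TensorProduct.mk ℤ ℚ G 1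
  have hbc : IsBaseChange ℚ f0 := TensorProduct.isBaseChange ℤ G ℚ
  have hloc : IsLocalizedModule (nonZeroDivisors ℤ) f0 :=
    (isLocalizedModule_iff_isBaseChange (nonZeroDivisors ℤ) ℚ f0).mpr hbc
  -- f0 is injective
  have hf0 : Function.Injective f0 := by
    intro a b hab
    have h : f0 (a - b) = 0 := by simp [map_sub, hab]
    rw [IsLocalizedModule.eq_zero_iff (nonZeroDivisors ℤ) f0] at h
    obtain ⟨s, hs⟩ := h
    have := htf s (a - b) (nonZeroDivisors.coe_ne_zero s) hs
    exact sub_eq_zero.mp this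
  -- V is countable
  have : Countable V := by
    have hsurj : Function.Surjective
        (fun p : G × (nonZeroDivisors ℤ) => IsLocalizedModule.mk' f0 p.1 p.2) := by
      intro x
      obtain ⟨⟨m, s⟩, h⟩ := IsLocalizedModule.mk'_surjective (nonZeroDivisors ℤ) f0 x
      exact ⟨⟨m, s⟩, h⟩
    exact Function.Surjective.countable hsurj
  -- basis of V over ℚ with countable index
  let b := Module.Basis.ofVectorSpace ℚ V
  set ι := Module.Basis.ofVectorSpaceIndex ℚ V
  have hιc : Countable ι := inferInstance
  obtain ⟨e₁, he₁⟩ := hιc.exists_injective_nat'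
  -- basis of ℝ over ℚ with infinite index
  let c := Module.Basis.ofVectorSpace ℚ ℝ
  set J := Module.Basis.ofVectorSpaceIndex ℚ ℝ
  have hJ : Infinite J := by
    rw [Cardinal.infinite_iff, c.mk_eq_rank'', Real.rank_rat_real]
    exact Cardinal.aleph0_le_continuum
  let e₂ : ℕ ↪ J := Infinite.natEmbedding J
  let g : ι → J := e₂ ∘ e₁
  have hg : Function.Injective g := e₂.injective.comp he₁
  -- build the ℚ-linear injection V →ₗ[ℚ] ℝ
  let F : V →ₗ[ℚ] ℝ :=
    (c.repr.symm.toLinearMap.comp (Finsupp.lmapDomain ℚ ℚ g)).comp b.repr.toLinearMap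
  have hF : Function.Injective F := by
    simp only [F, LinearMap.coe_comp, LinearEquiv.coe_coe, Finsupp.lmapDomain_apply]
    exact (c.repr.symm.injective.comp (Finsupp.mapDomain_injective hg)).comp b.repr.injective
  exact ⟨F.toAddMonoidHom.comp f0.toAddMonoidHom, hF.comp hf0⟩
end

section
/- Let (V,E) and (W,F) be Bratteli diagrams with embeddings ξ, ξ⁰, ξ¹ as specified. Then every R_E-invariant Borel probability measure μ on X_E satisfies μ({x ∈ X_E : x_n ∈ ξ⁰(F_n) for all n ≥ 1}) = 0 and μ({x ∈ X_E : x_n ∈ ξ¹(F_n) for all n ≥ 1}) = 0. -/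
open MeasureTheory

structure Bratteli where
  V : ℕ → Type
  E : ℕ → Type
  src : (n : ℕ) → E n → V n
  tgt : (n : ℕ) → E n → V (n + 1)
  V_finite : ∀ n, Finite (V n)
  V_nonempty : ∀ n, Nonempty (V n)
  V0_subsingleton : Subsingleton (V 0)
  E_finite : ∀ n, Finite (E n)
  E_nonempty : ∀ n, Nonempty (E n)

namespace Bratteli

variable (D : Bratteli)

instance (n : ℕ) : Finite (D.E n) := D.E_finite n
instance (n : ℕ) : Finite (D.V n) := D.V_finite n
instance (n : ℕ) : TopologicalSpace (D.E n) := ⊥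
instance (n : ℕ) : DiscreteTopology (D.E n) := ⟨rfl⟩

/-- The infinite path space `X_E`.  Coordinate `k` corresponds to the edge `x_{k+1}`
of the paper, lying in the edge set `E_{k+1}` (between vertex levels `k` and `k+1`). -/
def X : Type := { x : (n : ℕ) → D.E n // ∀ n, D.tgt n (x n) = D.src (n + 1) (x (n + 1)) }

instance : TopologicalSpace D.X :=
  inferInstanceAs (TopologicalSpace
    { x : (n : ℕ) → D.E n // ∀ n, D.tgt n (x n) = D.src (n + 1) (x (n + 1)) })

/-- `p` (a full choice of one edge at every level) is a finite path of length `n`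
when restricted to its first `n` coordinates, i.e. coordinates `0,…,n-1` are
composable.  A path of length `n` represents an element of `E_{0,n}` of the paper. -/
def IsPath (n : ℕ) (p : (k : ℕ) → D.E k) : Prop :=
  ∀ k, k + 1 < n → D.tgt k (p k) = D.src (k + 1) (p (k + 1))

/-- The cylinder set `U(p)` determined by the first `n` coordinates of `p`. -/
def cyl (n : ℕ) (p : (k : ℕ) → D.E k) : Set D.X :=
  { x | ∀ k, k < n → x.1 k = p k }

/-- The set `β_{p,q}` for `p, q ∈ E_{0,n}`. -/
def beta (n : ℕ) (p q : (k : ℕ) → D.E k) : Set (D.X × D.X) :=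
  { z | (∀ k, k < n → z.1.1 k = p k ∧ z.2.1 k = q k) ∧ ∀ k, n ≤ k → z.1.1 k = z.2.1 k }

/-- Tail equivalence `R_E`. -/
def RE : Set (D.X × D.X) :=
  ⋃ (n : ℕ) (p : (k : ℕ) → D.E k) (q : (k : ℕ) → D.E k)
    (_ : D.IsPath (n + 1) p) (_ : D.IsPath (n + 1) q)
    (_ : D.tgt n (p n) = D.tgt n (q n)), D.beta (n + 1) p q

instance : MeasurableSpace D.X := borel D.X

/-- A (Borel) measure `μ` is invariant for a relation `S ⊆ X × X` if for every
Borel subset `U ⊆ S` on which both coordinate projections are injective, the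
images of `U` under the two projections have the same measure. -/
def Invariant (μ : Measure D.X) (S : Set (D.X × D.X)) : Prop :=
  ∀ U : Set (D.X × D.X), U ⊆ S → MeasurableSet U →
    Set.InjOn Prod.fst U → Set.InjOn Prod.snd U →
    μ (Prod.fst '' U) = μ (Prod.snd '' U)

end Bratteli

/-- The inverse of a relation. -/
def relInv {α : Type*} (S : Set (α × α)) : Set (α × α) := { z | (z.2, z.1) ∈ S }

/-- Composition of relations: `S ∘ T = {(x,y) : ∃ z, (x,z) ∈ S, (z,y) ∈ T}`. -/
def relComp {α : Type*} (S T : Set (α × α)) : Set (α × α) :=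
  { z | ∃ w, (z.1, w) ∈ S ∧ (w, z.2) ∈ T }

/-- A pair of disjoint embeddings `ξ⁰, ξ¹` of a Bratteli diagram `(W,F)` (here `B`)
into a Bratteli diagram `(V,E)` (here `D`), over a common vertex embedding `ξ`. -/
structure BratteliEmb (B D : Bratteli) where
  xiV : (n : ℕ) → B.V n → D.V n
  xi0 : (n : ℕ) → B.E n → D.E n
  xi1 : (n : ℕ) → B.E n → D.E n
  xiV_inj : ∀ n, Function.Injective (xiV n)
  xi0_inj : ∀ n, Function.Injective (xi0 n)
  xi1_inj : ∀ n, Function.Injective (xi1 n)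
  src_xi0 : ∀ n (f : B.E n), D.src n (xi0 n f) = xiV n (B.src n f)
  tgt_xi0 : ∀ n (f : B.E n), D.tgt n (xi0 n f) = xiV (n + 1) (B.tgt n f)
  src_xi1 : ∀ n (f : B.E n), D.src n (xi1 n f) = xiV n (B.src n f)
  tgt_xi1 : ∀ n (f : B.E n), D.tgt n (xi1 n f) = xiV (n + 1) (B.tgt n f)
  disjoint01 : ∀ n (f g : B.E n), xi0 n f ≠ xi1 n g

namespace BratteliEmb

variable {B D : Bratteli} (E : BratteliEmb B D)

/-- The set `λ^{1,0}_{p,q}` for `(p,q) ∈ I_n^W` (paths of length `n+1`): pairs whose first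
`n+1` coordinates are `p` resp. `q`, and whose remaining coordinates run through
`ξ¹(f_k)` resp. `ξ⁰(f_k)` for a common infinite path `(f_k)` of `(W,F)`. -/
def lam (n : ℕ) (p q : (k : ℕ) → D.E k) : Set (D.X × D.X) :=
  { z | (∀ k, k < n + 1 → z.1.1 k = p k ∧ z.2.1 k = q k) ∧
        ∀ k, n + 1 ≤ k → ∃ f : B.E k, z.1.1 k = E.xi1 k f ∧ z.2.1 k = E.xi0 k f }

/-- The set `δ^{1,0}_{p,q}` for `(p,q) ∈ I_n^W`: the union of `λ^{1,0}_{p,q}` with the pairs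
which, after a finite common block of `(ξ¹,ξ⁰)`-matched edges, either swap to a
`(ξ⁰,ξ¹)`-matched edge and then agree, or meet a common edge outside
`ξ⁰(F) ∪ ξ¹(F)` and then agree. -/
def delta (n : ℕ) (p q : (k : ℕ) → D.E k) : Set (D.X × D.X) :=
  E.lam n p q ∪
  { z | (∀ k, k < n + 1 → z.1.1 k = p k ∧ z.2.1 k = q k) ∧
        ∃ m : ℕ,
          (∀ k, n + 1 ≤ k → k ≤ n + 1 + m →
            ∃ f : B.E k, z.1.1 k = E.xi1 k f ∧ z.2.1 k = E.xi0 k f) ∧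
          (∃ f : B.E (n + m + 2), z.1.1 (n + m + 2) = E.xi0 (n + m + 2) f ∧
            z.2.1 (n + m + 2) = E.xi1 (n + m + 2) f) ∧
          (∀ k, n + m + 2 < k → z.1.1 k = z.2.1 k) } ∪
  { z | (∀ k, k < n + 1 → z.1.1 k = p k ∧ z.2.1 k = q k) ∧
        ∃ m : ℕ,
          (∀ k, n + 1 ≤ k → k ≤ n + 1 + m →
            ∃ f : B.E k, z.1.1 k = E.xi1 k f ∧ z.2.1 k = E.xi0 k f) ∧
          (∀ f : B.E (n + m + 2), z.1.1 (n + m + 2) ≠ E.xi0 (n + m + 2) f ∧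
            z.1.1 (n + m + 2) ≠ E.xi1 (n + m + 2) f) ∧
          (∀ k, n + m + 2 ≤ k → z.1.1 k = z.2.1 k) }

/-- The equivalence relation `R`, generated by `R_E` together with all
`δ^{1,0}_{p,q}` and `δ^{0,1}_{q,p}` for `(p,q) ∈ I_n^W`, `n ≥ 1`. -/
def Rfull : Set (D.X × D.X) :=
  D.RE ∪
  ⋃ (n : ℕ) (p : (k : ℕ) → D.E k) (q : (k : ℕ) → D.E k)
    (_ : D.IsPath (n + 1) p) (_ : D.IsPath (n + 1) q)
    (_ : D.tgt n (p n) = D.tgt n (q n))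
    (_ : ∃ w : B.V (n + 1), D.tgt n (p n) = E.xiV (n + 1) w),
    (E.delta n p q ∪ relInv (E.delta n p q))

/-- The compact open subrelation `R_n` (`n+1` in the indexing of the paper). -/
def Rn (n : ℕ) : Set (D.X × D.X) :=
  (⋃ (p : (k : ℕ) → D.E k) (q : (k : ℕ) → D.E k)
    (_ : D.IsPath (n + 1) p) (_ : D.IsPath (n + 1) q)
    (_ : D.tgt n (p n) = D.tgt n (q n)), D.beta (n + 1) p q) ∪
  ⋃ (p : (k : ℕ) → D.E k) (q : (k : ℕ) → D.E k)
    (_ : D.IsPath (n + 1) p) (_ : D.IsPath (n + 1) q)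
    (_ : D.tgt n (p n) = D.tgt n (q n))
    (_ : ∃ w : B.V (n + 1), D.tgt n (p n) = E.xiV (n + 1) w),
    (E.delta n p q ∪ relInv (E.delta n p q))

end BratteliEmb


section Aux

open MeasureTheory

variable {B D : Bratteli}

instance (D : Bratteli) : BorelSpace D.X := ⟨rfl⟩

lemma coord_measurableSet (D : Bratteli) (k : ℕ) (e : D.E k) :
    MeasurableSet {x : D.X | x.1 k = e} := by
  have hc : Continuous (fun x : D.X => x.1 k) :=
    (continuous_apply k).comp continuous_subtype_val
  have : IsOpen ((fun x : D.X => x.1 k) ⁻¹' {e}) :=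
    (isOpen_discrete ({e} : Set (D.E k))).preimage hc
  simpa [Set.preimage, Set.mem_singleton_iff] using this.measurableSet

/-- The key lemma: the set of paths all of whose edges lie in `ξ⁰(F)` is null. -/
lemma aux_null (E : BratteliEmb B D) (μ : Measure D.X) [IsProbabilityMeasure μ]
    (hinv : D.Invariant μ D.RE) :
    μ { x : D.X | ∀ k, ∃ f : B.E k, x.1 k = E.xi0 k f } = 0 := by
  classical
  set Z : Set D.X := { x : D.X | ∀ k, ∃ f : B.E k, x.1 k = E.xi0 k f } with hZdef
  -- the "translated" sets
  set S : ℕ → Set D.X := fun n =>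
    { y : D.X | (∃ f, y.1 n = E.xi1 n f) ∧ ∀ k, k < n → ∃ f, y.1 k = E.xi0 k f } with hSdef
  -- the graphs of the translations
  set U : ℕ → Set (D.X × D.X) := fun n =>
    { z : D.X × D.X | z.1 ∈ Z ∧ (∃ f, z.1.1 n = E.xi0 n f ∧ z.2.1 n = E.xi1 n f) ∧
        ∀ k, k ≠ n → z.2.1 k = z.1.1 k } with hUdef
  have hZmeas : MeasurableSet Z := by
    have : Z = ⋂ k, ⋃ f : B.E k, {x : D.X | x.1 k = E.xi0 k f} := by
      ext x; simp [hZdef, Set.mem_iInter, Set.mem_iUnion]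
    rw [this]
    exact MeasurableSet.iInter fun k => MeasurableSet.iUnion fun f =>
      coord_measurableSet D k _
  have hUmeas : ∀ n, MeasurableSet (U n) := by
    intro n
    have : U n = (Prod.fst ⁻¹' Z) ∩
        (⋃ f : B.E n, (Prod.fst ⁻¹' {x : D.X | x.1 n = E.xi0 n f}) ∩
          (Prod.snd ⁻¹' {x : D.X | x.1 n = E.xi1 n f})) ∩
        (⋂ k, ⋂ (_ : k ≠ n), ⋃ e : D.E k,
          (Prod.fst ⁻¹' {x : D.X | x.1 k = e}) ∩
          (Prod.snd ⁻¹' {x : D.X | x.1 k = e})) := by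
      ext z
      simp only [hUdef, Set.mem_setOf_eq, Set.mem_inter_iff, Set.mem_preimage,
        Set.mem_iUnion, Set.mem_iInter, Set.mem_setOf_eq]
      constructor
      · rintro ⟨h1, ⟨f, hf1, hf2⟩, h3⟩
        exact ⟨⟨h1, f, hf1, hf2⟩, fun k hk => ⟨z.1.1 k, rfl, h3 k hk⟩⟩
      · rintro ⟨⟨h1, f, hf1, hf2⟩, h3⟩
        refine ⟨h1, ⟨f, hf1, hf2⟩, fun k hk => ?_⟩
        obtain ⟨e, he1, he2⟩ := h3 k hk
        rw [he1, he2]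
    rw [this]
    refine ((hZmeas.preimage measurable_fst).inter ?_).inter ?_
    · exact MeasurableSet.iUnion fun f =>
        ((coord_measurableSet D n _).preimage measurable_fst).inter
        ((coord_measurableSet D n _).preimage measurable_snd)
    · exact MeasurableSet.iInter fun k => MeasurableSet.iInter fun _ =>
        MeasurableSet.iUnion fun e =>
          ((coord_measurableSet D k _).preimage measurable_fst).inter
          ((coord_measurableSet D k _).preimage measurable_snd)
  have hUsub : ∀ n, U n ⊆ D.RE := by
    intro n z hz
    obtain ⟨h1, ⟨f, hf1, hf2⟩, h3⟩ := hz
    rw [Bratteli.RE]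
    simp only [Set.mem_iUnion]
    refine ⟨n, z.1.1, z.2.1, fun k _ => z.1.2 k, fun k _ => z.2.2 k, ?_, ?_⟩
    · rw [hf1, hf2, E.tgt_xi0, E.tgt_xi1]
    · exact ⟨fun k _ => ⟨rfl, rfl⟩, fun k hk => (h3 k (by omega)).symm⟩
  have hinj1 : ∀ n, Set.InjOn Prod.fst (U n) := by
    intro n z hz z' hz' hzz
    obtain ⟨_, ⟨f, hf1, hf2⟩, h3⟩ := hz
    obtain ⟨_, ⟨f', hf1', hf2'⟩, h3'⟩ := hz'
    have hff : f = f' := E.xi0_inj n (by rw [← hf1, ← hf1', hzz])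
    have h2 : z.2 = z'.2 := by
      apply Subtype.ext; funext k
      by_cases hk : k = n
      · subst hk; rw [hf2, hf2', hff]
      · rw [h3 k hk, h3' k hk, hzz]
    exact Prod.ext hzz h2
  have hinj2 : ∀ n, Set.InjOn Prod.snd (U n) := by
    intro n z hz z' hz' hzz
    obtain ⟨_, ⟨f, hf1, hf2⟩, h3⟩ := hz
    obtain ⟨_, ⟨f', hf1', hf2'⟩, h3'⟩ := hz'
    have hff : f = f' := E.xi1_inj n (by rw [← hf2, ← hf2', hzz])
    have h1 : z.1 = z'.1 := by
      apply Subtype.ext; funext k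
      by_cases hk : k = n
      · subst hk; rw [hf1, hf1', hff]
      · rw [← h3 k hk, ← h3' k hk, hzz]
    exact Prod.ext h1 hzz
  have himg1 : ∀ n, Prod.fst '' U n = Z := by
    intro n
    apply Set.Subset.antisymm
    · rintro x ⟨z, hz, rfl⟩; exact hz.1
    · intro x hx
      obtain ⟨f, hf⟩ := hx n
      set y1 : (k : ℕ) → D.E k := Function.update x.1 n (E.xi1 n f) with hy1
      have hy1n : y1 n = E.xi1 n f := Function.update_self n _ _
      have hy1k : ∀ k, k ≠ n → y1 k = x.1 k := fun k hk => Function.update_of_ne hk _ _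
      have hpath : ∀ m, D.tgt m (y1 m) = D.src (m + 1) (y1 (m + 1)) := by
        intro m
        by_cases hm : m = n
        · subst hm
          rw [hy1n, hy1k (m + 1) (by omega), E.tgt_xi1, ← E.tgt_xi0, ← hf]
          exact x.2 m
        · rw [hy1k m hm]
          by_cases hm1 : m + 1 = n
          · subst hm1
            rw [hy1n, E.src_xi1, ← E.src_xi0, ← hf]
            exact x.2 m
          · rw [hy1k (m + 1) hm1]
            exact x.2 m
      refine ⟨(x, ⟨y1, hpath⟩), ⟨hx, ⟨f, hf, hy1n⟩, fun k hk => hy1k k hk⟩, rfl⟩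
  have himg2 : ∀ n, Prod.snd '' U n ⊆ S n := by
    rintro n y ⟨z, ⟨h1, ⟨f, hf1, hf2⟩, h3⟩, rfl⟩
    refine ⟨⟨f, hf2⟩, fun k hk => ?_⟩
    obtain ⟨g, hg⟩ := h1 k
    exact ⟨g, by rw [h3 k (by omega), hg]⟩
  have hSmeas : ∀ n, MeasurableSet (S n) := by
    intro n
    have : S n = (⋃ f : B.E n, {y : D.X | y.1 n = E.xi1 n f}) ∩
        ⋂ k, ⋂ (_ : k < n), ⋃ f : B.E k, {y : D.X | y.1 k = E.xi0 k f} := by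
      ext y
      simp [hSdef, Set.mem_iInter, Set.mem_iUnion]
    rw [this]
    exact (MeasurableSet.iUnion fun f => coord_measurableSet D n _).inter
      (MeasurableSet.iInter fun k => MeasurableSet.iInter fun _ =>
        MeasurableSet.iUnion fun f => coord_measurableSet D k _)
  have hSdisj : Pairwise (Function.onFun Disjoint S) := by
    have key : ∀ m n, m < n → Disjoint (S m) (S n) := by
      intro m n hmn
      rw [Set.disjoint_left]
      rintro y ⟨⟨f, hf⟩, -⟩ ⟨-, h2⟩
      obtain ⟨g, hg⟩ := h2 m hmn
      exact E.disjoint01 m g f (by rw [← hf, ← hg])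
    intro m n hmn
    rcases lt_or_gt_of_ne hmn with h | h
    · exact key m n h
    · exact (key n m h).symm
  have hle : ∀ n, μ Z ≤ μ (S n) := by
    intro n
    calc μ Z = μ (Prod.fst '' U n) := by rw [himg1 n]
      _ = μ (Prod.snd '' U n) := hinv (U n) (hUsub n) (hUmeas n) (hinj1 n) (hinj2 n)
      _ ≤ μ (S n) := measure_mono (himg2 n)
  by_contra hZ0
  have htop : (⊤ : ENNReal) ≤ μ (⋃ n, S n) := by
    rw [measure_iUnion hSdisj hSmeas]
    calc (⊤ : ENNReal) = ∑' _ : ℕ, μ Z := (ENNReal.tsum_const_eq_top_of_ne_zero hZ0).symm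
      _ ≤ ∑' n, μ (S n) := ENNReal.tsum_le_tsum hle
  have : μ (⋃ n, S n) ≤ 1 := prob_le_one
  simp only [top_le_iff] at htop
  rw [htop] at this
  exact (by norm_num : ¬ ((⊤ : ENNReal) ≤ 1)) this

/-- Swap the two edge embeddings. -/
def BratteliEmb.swap (E : BratteliEmb B D) : BratteliEmb B D where
  xiV := E.xiV
  xi0 := E.xi1
  xi1 := E.xi0
  xiV_inj := E.xiV_inj
  xi0_inj := E.xi1_inj
  xi1_inj := E.xi0_inj
  src_xi0 := E.src_xi1
  tgt_xi0 := E.tgt_xi1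
  src_xi1 := E.src_xi0
  tgt_xi1 := E.tgt_xi0
  disjoint01 := fun n f g => (E.disjoint01 n g f).symm

end Aux

open MeasureTheory in
/-- Every `R_E`-invariant Borel probability measure on `X_E` gives measure
zero to the set of paths all of whose edges lie in `ξ⁰(F)`, and to the set of paths all of
whose edges lie in `ξ¹(F)`. -/
theorem stmt8 (B D : Bratteli) (E : BratteliEmb B D)
    (μ : Measure D.X) [IsProbabilityMeasure μ] (hinv : D.Invariant μ D.RE) :
    μ { x : D.X | ∀ k, ∃ f : B.E k, x.1 k = E.xi0 k f } = 0 ∧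
    μ { x : D.X | ∀ k, ∃ f : B.E k, x.1 k = E.xi1 k f } = 0 :=
  ⟨aux_null E μ hinv, aux_null E.swap μ hinv⟩
end

section
/- Let (V,E) and (W,F) be Bratteli diagrams with embeddings ξ, ξ⁰, ξ¹ as specified, n ≥ 1 and (p,q) ∈ I_n^W. Then δ^{1,0}_{p,q} is the graph of a bijection from U¹(p) onto U⁰(q) (every (x,y) ∈ δ^{1,0}_{p,q} has x ∈ U¹(p) and y ∈ U⁰(q), each x ∈ U¹(p) occurs in exactly one pair and each y ∈ U⁰(q) occurs in exactly one pair), this bijection is a homeomorphism for the subspace topologies of X_E, and δ^{1,0}_{p,q} ∘ δ^{0,1}_{q,p} = ⋃_{f ∈ F_{n+1}, ξ(i(f)) = t(p)} β_{p·ξ¹(f), p·ξ¹(f)}, where the sets in this union are pairwise disjoint. -/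
open MeasureTheory

namespace BratteliEmb

variable {B D : Bratteli} (E : BratteliEmb B D)

/-- `U¹(p) = ⋃ { U(p·ξ¹(f)) : f ∈ F_{n+1}, ξ(i(f)) = t(p) }`. -/
def U1 (n : ℕ) (p : (k : ℕ) → D.E k) : Set D.X :=
  ⋃ (f : B.E (n + 1)) (_ : E.xiV (n + 1) (B.src (n + 1) f) = D.tgt n (p n)),
    D.cyl (n + 2) (Function.update p (n + 1) (E.xi1 (n + 1) f))

/-- `U⁰(q) = ⋃ { U(q·ξ⁰(f)) : f ∈ F_{n+1}, ξ(i(f)) = t(q) }`. -/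
def U0 (n : ℕ) (q : (k : ℕ) → D.E k) : Set D.X :=
  ⋃ (f : B.E (n + 1)) (_ : E.xiV (n + 1) (B.src (n + 1) f) = D.tgt n (q n)),
    D.cyl (n + 2) (Function.update q (n + 1) (E.xi0 (n + 1) f))

end BratteliEmb

namespace BratteliEmb

variable {B D : Bratteli} (E : BratteliEmb B D)

/-- Swap the two edge embeddings. -/
def swap_s9 : BratteliEmb B D where
  xiV := E.xiV
  xi0 := E.xi1
  xi1 := E.xi0
  xiV_inj := E.xiV_inj
  xi0_inj := E.xi1_inj
  xi1_inj := E.xi0_inj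
  src_xi0 := E.src_xi1
  tgt_xi0 := E.tgt_xi1
  src_xi1 := E.src_xi0
  tgt_xi1 := E.tgt_xi0
  disjoint01 := fun n f g h => E.disjoint01 n g f h.symm

/-- All coordinates in `[n+1, k)` lie in the range of `ξ¹`. -/
def Run (n : ℕ) (x : (k : ℕ) → D.E k) (k : ℕ) : Prop :=
  ∀ j, n + 1 ≤ j → j < k → ∃ g : B.E j, x j = E.xi1 j g

open Classical in
/-- The canonical image of a sequence under `δ^{1,0}_{p,q}`. -/
noncomputable def fwd (n : ℕ) (q : (k : ℕ) → D.E k) (x : (k : ℕ) → D.E k) :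
    (k : ℕ) → D.E k := fun k =>
  if k ≤ n then q k
  else if E.Run n x k then
    if h1 : ∃ f : B.E k, x k = E.xi1 k f then E.xi0 k h1.choose
    else if h0 : ∃ f : B.E k, x k = E.xi0 k f then E.xi1 k h0.choose
    else x k
  else x k

variable {E}
variable {n : ℕ} {p q x : (k : ℕ) → D.E k}

lemma fwd_low {k : ℕ} (hk : k ≤ n) : E.fwd n q x k = q k := by
  simp only [fwd, if_pos hk]

lemma fwd_run1 {k : ℕ} (hk : ¬ k ≤ n) (hr : E.Run n x k) {f : B.E k}
    (hf : x k = E.xi1 k f) : E.fwd n q x k = E.xi0 k f := by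
  have h1 : ∃ f, x k = E.xi1 k f := ⟨f, hf⟩
  have hc : h1.choose = f := E.xi1_inj k (h1.choose_spec.symm.trans hf)
  simp only [fwd, if_neg hk, if_pos hr, dif_pos h1, hc]

lemma fwd_run0 {k : ℕ} (hk : ¬ k ≤ n) (hr : E.Run n x k)
    (h1 : ∀ f : B.E k, x k ≠ E.xi1 k f) {f : B.E k}
    (hf : x k = E.xi0 k f) : E.fwd n q x k = E.xi1 k f := by
  have h1' : ¬ ∃ f, x k = E.xi1 k f := by push_neg; exact h1
  have h0 : ∃ f, x k = E.xi0 k f := ⟨f, hf⟩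
  have hc : h0.choose = f := E.xi0_inj k (h0.choose_spec.symm.trans hf)
  simp only [fwd, if_neg hk, if_pos hr, dif_neg h1', dif_pos h0, hc]

lemma fwd_none {k : ℕ} (hk : ¬ k ≤ n) (hr : E.Run n x k)
    (h1 : ∀ f : B.E k, x k ≠ E.xi1 k f) (h0 : ∀ f : B.E k, x k ≠ E.xi0 k f) :
    E.fwd n q x k = x k := by
  have h1' : ¬ ∃ f, x k = E.xi1 k f := by push_neg; exact h1
  have h0' : ¬ ∃ f, x k = E.xi0 k f := by push_neg; exact h0
  simp only [fwd, if_neg hk, if_pos hr, dif_neg h1', dif_neg h0']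

lemma fwd_notrun {k : ℕ} (hk : ¬ k ≤ n) (hr : ¬ E.Run n x k) :
    E.fwd n q x k = x k := by
  simp only [fwd, if_neg hk, if_neg hr]

/-- `δ` is the graph of `fwd`: determinism of the second coordinate. -/
theorem eq_fwd_of_mem_delta {xx y : D.X} (h : (xx, y) ∈ E.delta n p q) :
    y.1 = E.fwd n q xx.1 := by
  funext k
  rcases le_or_gt k n with hk | hk
  · have hyk : y.1 k = q k := by
      rcases h with (⟨h1, _⟩ | ⟨h1, _⟩) | ⟨h1, _⟩ <;> exact (h1 k (by omega)).2
    rw [hyk, fwd_low hk]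
  · have hk' : ¬ k ≤ n := by omega
    rcases h with (⟨_, h2⟩ | ⟨_, m, hrun, ⟨g, hg1, hg2⟩, htail⟩) | ⟨_, m, hrun, hnone, htail⟩
    · obtain ⟨f, hf1, hf2⟩ := h2 k hk
      have hr : E.Run n xx.1 k := fun j hj _ => (h2 j hj).imp fun g hg => hg.1
      rw [hf2, fwd_run1 hk' hr hf1]
    · rcases lt_trichotomy k (n + m + 2) with hlt | heq | hgt
      · obtain ⟨f, hf1, hf2⟩ := hrun k hk (by omega)
        have hr : E.Run n xx.1 k := fun j hj hjk =>
          (hrun j hj (by omega)).imp fun g' hg' => hg'.1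
        rw [hf2, fwd_run1 hk' hr hf1]
      · subst heq
        have hr : E.Run n xx.1 (n + m + 2) := fun j hj hjk =>
          (hrun j hj (by omega)).imp fun g' hg' => hg'.1
        have h1 : ∀ f : B.E (n + m + 2), xx.1 (n + m + 2) ≠ E.xi1 (n + m + 2) f :=
          fun f hf => E.disjoint01 _ g f (hg1.symm.trans hf)
        rw [hg2, fwd_run0 hk' hr h1 hg1]
      · have hnr : ¬ E.Run n xx.1 k := fun hr => by
          obtain ⟨f, hf⟩ := hr (n + m + 2) (by omega) hgt
          exact E.disjoint01 _ g f (hg1.symm.trans hf)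
        rw [fwd_notrun hk' hnr]
        exact (htail k hgt).symm
    · rcases lt_trichotomy k (n + m + 2) with hlt | heq | hgt
      · obtain ⟨f, hf1, hf2⟩ := hrun k hk (by omega)
        have hr : E.Run n xx.1 k := fun j hj hjk =>
          (hrun j hj (by omega)).imp fun g' hg' => hg'.1
        rw [hf2, fwd_run1 hk' hr hf1]
      · subst heq
        have hr : E.Run n xx.1 (n + m + 2) := fun j hj hjk =>
          (hrun j hj (by omega)).imp fun g' hg' => hg'.1
        rw [fwd_none hk' hr (fun f => (hnone f).2) (fun f => (hnone f).1)]
        exact (htail _ le_rfl).symm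
      · have hnr : ¬ E.Run n xx.1 k := fun hr => by
          obtain ⟨f, hf⟩ := hr (n + m + 2) (by omega) hgt
          exact (hnone f).2 hf
        rw [fwd_notrun hk' hnr]
        exact (htail k (by omega)).symm

lemma fwd_src_tgt {k : ℕ} (hk : ¬ k ≤ n) :
    D.src k (E.fwd n q x k) = D.src k (x k) ∧
      D.tgt k (E.fwd n q x k) = D.tgt k (x k) := by
  by_cases hr : E.Run n x k
  · by_cases h1 : ∃ f, x k = E.xi1 k f
    · obtain ⟨f, hf⟩ := h1
      rw [fwd_run1 hk hr hf, hf, E.src_xi0, E.src_xi1, E.tgt_xi0, E.tgt_xi1]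
      exact ⟨rfl, rfl⟩
    · push_neg at h1
      by_cases h0 : ∃ f, x k = E.xi0 k f
      · obtain ⟨f, hf⟩ := h0
        rw [fwd_run0 hk hr h1 hf, hf, E.src_xi0, E.src_xi1, E.tgt_xi0, E.tgt_xi1]
        exact ⟨rfl, rfl⟩
      · push_neg at h0
        rw [fwd_none hk hr h1 h0]; exact ⟨rfl, rfl⟩
  · rw [fwd_notrun hk hr]; exact ⟨rfl, rfl⟩

/-- `fwd` of a composable sequence is composable. -/
theorem fwd_comp (hq : D.IsPath (n + 1) q) (ht : D.tgt n (p n) = D.tgt n (q n))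
    (xx : D.X) (hxp : ∀ k, k ≤ n → xx.1 k = p k) (k : ℕ) :
    D.tgt k (E.fwd n q xx.1 k) = D.src (k + 1) (E.fwd n q xx.1 (k + 1)) := by
  by_cases hk : k + 1 ≤ n
  · rw [fwd_low (by omega), fwd_low hk]
    exact hq k (by omega)
  · by_cases hk2 : k ≤ n
    · have hkn : k = n := by omega
      subst hkn
      rw [fwd_low le_rfl, (fwd_src_tgt (x := xx.1) (k := k + 1) (by omega)).1,
        ← xx.2 k, hxp k le_rfl]
      exact ht.symm
    · rw [(fwd_src_tgt (x := xx.1) (k := k + 1) (by omega)).1,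
        (fwd_src_tgt (x := xx.1) (k := k)  hk2).2]
      exact xx.2 k

/-- Existence: the pair `(x, fwd x)` lies in `δ`. -/
theorem fwd_mem_delta (xx : D.X) (hxp : ∀ k, k ≤ n → xx.1 k = p k)
    (hx1 : ∃ f : B.E (n + 1), xx.1 (n + 1) = E.xi1 (n + 1) f)
    (y : D.X) (hy : y.1 = E.fwd n q xx.1) : (xx, y) ∈ E.delta n p q := by
  classical
  by_cases hall : ∀ k, n + 1 ≤ k → ∃ f : B.E k, xx.1 k = E.xi1 k f
  · left; left
    refine ⟨fun k hk => ⟨hxp k (by omega), by rw [hy]; exact fwd_low (by omega)⟩,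
      fun k hk => ?_⟩
    obtain ⟨f, hf⟩ := hall k hk
    exact ⟨f, hf, by rw [hy]; exact fwd_run1 (by omega) (fun j hj _ => hall j hj) hf⟩
  · push_neg at hall
    have hex : ∃ k, n + 1 ≤ k ∧ ∀ f : B.E k, xx.1 k ≠ E.xi1 k f := hall
    obtain ⟨k0, hk01, hk02, hmin⟩ :
        ∃ k0, (n + 1 ≤ k0) ∧ (∀ f : B.E k0, xx.1 k0 ≠ E.xi1 k0 f) ∧
          ∀ j, j < k0 → ¬(n + 1 ≤ j ∧ ∀ f : B.E j, xx.1 j ≠ E.xi1 j f) :=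
      ⟨Nat.find hex, (Nat.find_spec hex).1, (Nat.find_spec hex).2,
        fun j hj => Nat.find_min hex hj⟩
    have hrun : ∀ j, n + 1 ≤ j → j < k0 → ∃ f : B.E j, xx.1 j = E.xi1 j f := by
      intro j hj hjk
      by_contra hcon
      push_neg at hcon
      exact hmin j hjk ⟨hj, hcon⟩
    have hk0n : n + 2 ≤ k0 := by
      rcases Nat.lt_or_ge k0 (n + 2) with h | h
      · exfalso
        have hk0 : k0 = n + 1 := by omega
        subst hk0
        obtain ⟨f, hf⟩ := hx1
        exact hk02 f hf
      · exact h
    obtain ⟨m, hm⟩ : ∃ m, k0 = n + m + 2 := ⟨k0 - (n + 2), by omega⟩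
    subst hm
    have hrun' : ∀ k, n + 1 ≤ k → k ≤ n + 1 + m →
        ∃ f : B.E k, xx.1 k = E.xi1 k f ∧ y.1 k = E.xi0 k f := by
      intro k hk1 hk2
      obtain ⟨f, hf⟩ := hrun k hk1 (by omega)
      exact ⟨f, hf, by
        rw [hy]; exact fwd_run1 (by omega) (fun j hj hjk => hrun j hj (by omega)) hf⟩
    have hrK : E.Run n xx.1 (n + m + 2) := fun j hj hjk => hrun j hj hjk
    have hinit : ∀ k, k < n + 1 → xx.1 k = p k ∧ y.1 k = q k :=
      fun k hk => ⟨hxp k (by omega), by rw [hy]; exact fwd_low (by omega)⟩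
    by_cases h0 : ∃ f : B.E (n + m + 2), xx.1 (n + m + 2) = E.xi0 (n + m + 2) f
    · left; right
      obtain ⟨f, hf⟩ := h0
      refine ⟨hinit, m, hrun', ⟨f, hf, ?_⟩, ?_⟩
      · rw [hy]; exact fwd_run0 (by omega) hrK hk02 hf
      · intro k hgt
        have hnr : ¬ E.Run n xx.1 k := fun hr => by
          obtain ⟨g, hg⟩ := hr (n + m + 2) (by omega) hgt
          exact hk02 g hg
        rw [hy, fwd_notrun (by omega) hnr]
    · right
      push_neg at h0
      refine ⟨hinit, m, hrun', fun f => ⟨h0 f, hk02 f⟩, ?_⟩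
      intro k hge
      rcases eq_or_lt_of_le hge with heq | hgt
      · rw [hy, ← heq] at *
        rw [hy, fwd_none (by omega) (by rw [← heq] at hrK; exact hrK)
          (by rw [← heq] at hk02; exact hk02) (by rw [← heq] at h0; exact h0)]
      · have hnr : ¬ E.Run n xx.1 k := fun hr => by
          obtain ⟨g, hg⟩ := hr (n + m + 2) (by omega) hgt
          exact hk02 g hg
        rw [hy, fwd_notrun (by omega) hnr]

/-- Characterization of membership in `U¹(p)`. -/
lemma mem_U1 (xx : D.X) (hxp : ∀ k, k ≤ n → xx.1 k = p k)
    (hx1 : ∃ f : B.E (n + 1), xx.1 (n + 1) = E.xi1 (n + 1) f) : xx ∈ E.U1 n p := by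
  obtain ⟨f, hf⟩ := hx1
  refine Set.mem_iUnion.mpr ⟨f, Set.mem_iUnion.mpr ⟨?_, ?_⟩⟩
  · rw [← E.src_xi1, ← hf, ← xx.2 n, hxp n le_rfl]
  · intro k hk
    rcases Nat.lt_or_ge k (n + 1) with h | h
    · rw [Function.update_of_ne (by omega)]
      exact hxp k (by omega)
    · have hkn : k = n + 1 := by omega
      subst hkn
      rw [Function.update_self]
      exact hf

lemma of_mem_U1 {xx : D.X} (h : xx ∈ E.U1 n p) :
    (∀ k, k ≤ n → xx.1 k = p k) ∧
      ∃ f : B.E (n + 1), xx.1 (n + 1) = E.xi1 (n + 1) f := by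
  obtain ⟨f, hcond, hcyl⟩ : ∃ f, _ ∧ xx ∈ D.cyl (n + 2)
      (Function.update p (n + 1) (E.xi1 (n + 1) f)) := by
    simpa [U1, Set.mem_iUnion] using h
  constructor
  · intro k hk
    rw [hcyl k (by omega), Function.update_of_ne (by omega)]
  · exact ⟨f, by rw [hcyl (n + 1) (by omega), Function.update_self]⟩

lemma delta_props {xx y : D.X} (h : (xx, y) ∈ E.delta n p q) :
    ((∀ k, k ≤ n → xx.1 k = p k) ∧
      ∃ f : B.E (n + 1), xx.1 (n + 1) = E.xi1 (n + 1) f) ∧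
    ((∀ k, k ≤ n → y.1 k = q k) ∧
      ∃ f : B.E (n + 1), y.1 (n + 1) = E.xi0 (n + 1) f) := by
  rcases h with (⟨h1, h2⟩ | ⟨h1, m, h2, _, _⟩) | ⟨h1, m, h2, _, _⟩
  · exact ⟨⟨fun k hk => (h1 k (by omega)).1, (h2 (n + 1) le_rfl).imp
        fun f hf => hf.1⟩,
      ⟨fun k hk => (h1 k (by omega)).2, (h2 (n + 1) le_rfl).imp fun f hf => hf.2⟩⟩
  · exact ⟨⟨fun k hk => (h1 k (by omega)).1, (h2 (n + 1) le_rfl (by omega)).imp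
        fun f hf => hf.1⟩,
      ⟨fun k hk => (h1 k (by omega)).2, (h2 (n + 1) le_rfl (by omega)).imp
        fun f hf => hf.2⟩⟩
  · exact ⟨⟨fun k hk => (h1 k (by omega)).1, (h2 (n + 1) le_rfl (by omega)).imp
        fun f hf => hf.1⟩,
      ⟨fun k hk => (h1 k (by omega)).2, (h2 (n + 1) le_rfl (by omega)).imp
        fun f hf => hf.2⟩⟩

lemma delta_swap_sub : E.swap_s9.delta n q p ⊆ relInv (E.delta n p q) := by
  rintro z ((⟨h1, h2⟩ | ⟨h1, m, h2, ⟨g, hg1, hg2⟩, h4⟩) | ⟨h1, m, h2, h3, h4⟩)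
  · exact Or.inl (Or.inl ⟨fun k hk => ⟨(h1 k hk).2, (h1 k hk).1⟩,
      fun k hk => (h2 k hk).imp fun f hf => ⟨hf.2, hf.1⟩⟩)
  · exact Or.inl (Or.inr ⟨fun k hk => ⟨(h1 k hk).2, (h1 k hk).1⟩, m,
      fun k hk hk2 => (h2 k hk hk2).imp fun f hf => ⟨hf.2, hf.1⟩,
      ⟨g, hg2, hg1⟩, fun k hk => (h4 k hk).symm⟩)
  · refine Or.inr ⟨fun k hk => ⟨(h1 k hk).2, (h1 k hk).1⟩, m,
      fun k hk hk2 => (h2 k hk hk2).imp fun f hf => ⟨hf.2, hf.1⟩,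
      fun f => ⟨?_, ?_⟩, fun k hk => (h4 k hk).symm⟩
    · rw [← h4 (n + m + 2) le_rfl]; exact (h3 f).2
    · rw [← h4 (n + m + 2) le_rfl]; exact (h3 f).1

lemma delta_swap : E.swap_s9.delta n q p = relInv (E.delta n p q) := by
  refine Set.Subset.antisymm delta_swap_sub ?_
  intro z hz
  exact delta_swap_sub (E := E.swap_s9) (n := n) (p := q) (q := p)
    (show ((z.2, z.1) : D.X × D.X) ∈ E.swap_s9.swap_s9.delta n p q from hz)

lemma fwd_congr {x x' : (k : ℕ) → D.E k} {k : ℕ} (h : ∀ j, j ≤ k → x j = x' j) :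
    E.fwd n q x k = E.fwd n q x' k := by
  have hk' : x k = x' k := h k le_rfl
  by_cases hk : k ≤ n
  · rw [fwd_low hk, fwd_low hk]
  · have hrr : E.Run n x k ↔ E.Run n x' k := by
      constructor <;> intro hh j hj hjk
      · rw [← h j hjk.le]; exact hh j hj hjk
      · rw [h j hjk.le]; exact hh j hj hjk
    by_cases hr : E.Run n x k
    · by_cases h1 : ∃ f, x k = E.xi1 k f
      · obtain ⟨f, hf⟩ := h1
        rw [fwd_run1 hk hr hf, fwd_run1 hk (hrr.mp hr) (hk' ▸ hf)]
      · push_neg at h1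
        have h1' : ∀ f, x' k ≠ E.xi1 k f := fun f hf => h1 f (hk'.trans hf)
        by_cases h0 : ∃ f, x k = E.xi0 k f
        · obtain ⟨f, hf⟩ := h0
          rw [fwd_run0 hk hr h1 hf, fwd_run0 hk (hrr.mp hr) h1' (hk' ▸ hf)]
        · push_neg at h0
          have h0' : ∀ f, x' k ≠ E.xi0 k f := fun f hf => h0 f (hk'.trans hf)
          rw [fwd_none hk hr h1 h0, fwd_none hk (hrr.mp hr) h1' h0', hk']
    · rw [fwd_notrun hk hr, fwd_notrun hk (fun hh => hr (hrr.mpr hh)), hk']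

lemma fwd_continuous (k : ℕ) : Continuous fun xx : D.X => E.fwd n q xx.1 k := by
  have hne : ∀ j, Nonempty (D.E j) := D.E_nonempty
  have hres : Continuous fun (xx : D.X) (j : Fin (k + 1)) => xx.1 j :=
    continuous_pi fun j => (continuous_apply (j : ℕ)).comp continuous_subtype_val
  haveI : DiscreteTopology ((j : Fin (k + 1)) → D.E j) := Pi.discreteTopology
  have heq : (fun xx : D.X => E.fwd n q xx.1 k) =
      (fun v : (j : Fin (k + 1)) → D.E j =>
        E.fwd n q (fun j => if h : j < k + 1 then v ⟨j, h⟩ else (hne j).some) k) ∘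
      (fun (xx : D.X) (j : Fin (k + 1)) => xx.1 j) := by
    funext xx
    exact fwd_congr fun j hj => by rw [dif_pos (Nat.lt_succ_of_le hj)]
  rw [heq]
  exact continuous_of_discreteTopology.comp hres

variable (E)

/-- The forward map `U¹(p) → X` packaged with its composability proof. -/
noncomputable def toFunD (hq : D.IsPath (n + 1) q)
    (ht : D.tgt n (p n) = D.tgt n (q n)) (xx : ↥(E.U1 n p)) : D.X :=
  ⟨E.fwd n q xx.1.1, fwd_comp hq ht xx.1 (of_mem_U1 xx.2).1⟩

lemma toFunD_delta (hq : D.IsPath (n + 1) q) (ht : D.tgt n (p n) = D.tgt n (q n))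
    (xx : ↥(E.U1 n p)) : (xx.1, E.toFunD hq ht xx) ∈ E.delta n p q :=
  fwd_mem_delta xx.1 (of_mem_U1 xx.2).1 (of_mem_U1 xx.2).2 _ rfl

lemma toFunD_mem_U0 (hq : D.IsPath (n + 1) q) (ht : D.tgt n (p n) = D.tgt n (q n))
    (xx : ↥(E.U1 n p)) : E.toFunD hq ht xx ∈ E.U0 n q := by
  have h := (delta_props (E.toFunD_delta hq ht xx)).2
  exact mem_U1 (E := E.swap_s9) _ h.1 h.2

end BratteliEmb

/-- For `(p,q) ∈ I_n^W`, `δ^{1,0}_{p,q}` is the graph of a bijection from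
`U¹(p)` onto `U⁰(q)` which is a homeomorphism for the subspace topologies, and
`δ^{1,0}_{p,q} ∘ δ^{0,1}_{q,p}` is the disjoint union of the `β_{p·ξ¹(f),p·ξ¹(f)}` over
`f ∈ F_{n+1}` with `ξ(i(f)) = t(p)`. -/
theorem stmt9 (B D : Bratteli) (E : BratteliEmb B D) (n : ℕ) (p q : (k : ℕ) → D.E k)
    (hp : D.IsPath (n + 1) p) (hq : D.IsPath (n + 1) q)
    (ht : D.tgt n (p n) = D.tgt n (q n))
    (w : B.V (n + 1)) (hw : D.tgt n (p n) = E.xiV (n + 1) w) :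
    (∀ z ∈ E.delta n p q, z.1 ∈ E.U1 n p ∧ z.2 ∈ E.U0 n q) ∧
    (∀ x ∈ E.U1 n p, ∃! y : D.X, (x, y) ∈ E.delta n p q) ∧
    (∀ y ∈ E.U0 n q, ∃! x : D.X, (x, y) ∈ E.delta n p q) ∧
    (∃ h : ↥(E.U1 n p) ≃ₜ ↥(E.U0 n q),
      ∀ x : ↥(E.U1 n p), (x.val, (h x).val) ∈ E.delta n p q) ∧
    (relComp (E.delta n p q) (relInv (E.delta n p q)) =
      ⋃ (f : B.E (n + 1)) (_ : E.xiV (n + 1) (B.src (n + 1) f) = D.tgt n (p n)),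
        D.beta (n + 2) (Function.update p (n + 1) (E.xi1 (n + 1) f))
          (Function.update p (n + 1) (E.xi1 (n + 1) f))) ∧
    (∀ f f' : B.E (n + 1), E.xiV (n + 1) (B.src (n + 1) f) = D.tgt n (p n) →
      E.xiV (n + 1) (B.src (n + 1) f') = D.tgt n (p n) → f ≠ f' →
      Disjoint
        (D.beta (n + 2) (Function.update p (n + 1) (E.xi1 (n + 1) f))
          (Function.update p (n + 1) (E.xi1 (n + 1) f)))
        (D.beta (n + 2) (Function.update p (n + 1) (E.xi1 (n + 1) f'))
          (Function.update p (n + 1) (E.xi1 (n + 1) f')))) := by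
  classical
  have hB1 : ∀ z ∈ E.delta n p q, z.1 ∈ E.U1 n p ∧ z.2 ∈ E.U0 n q := by
    intro z hz
    obtain ⟨⟨ha, hb⟩, ⟨hc, hd⟩⟩ := BratteliEmb.delta_props hz
    exact ⟨BratteliEmb.mem_U1 z.1 ha hb, BratteliEmb.mem_U1 (E := E.swap_s9) z.2 hc hd⟩
  refine ⟨hB1, ?_, ?_, ?_, ?_, ?_⟩
  · -- unique y for each x ∈ U¹(p)
    intro x hx
    refine ⟨E.toFunD hq ht ⟨x, hx⟩, E.toFunD_delta hq ht ⟨x, hx⟩, fun y hy => ?_⟩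
    exact Subtype.ext (BratteliEmb.eq_fwd_of_mem_delta hy)
  · -- unique x for each y ∈ U⁰(q)
    intro y hy
    have hy' : y ∈ E.swap_s9.U1 n q := hy
    refine ⟨E.swap_s9.toFunD hp ht.symm ⟨y, hy'⟩, ?_, ?_⟩
    · have hmem := E.swap_s9.toFunD_delta hp ht.symm ⟨y, hy'⟩
      rw [BratteliEmb.delta_swap] at hmem
      exact hmem
    · intro x' hx'
      have hmem : (y, x') ∈ E.swap_s9.delta n q p := by
        rw [BratteliEmb.delta_swap]; exact hx'
      exact Subtype.ext (BratteliEmb.eq_fwd_of_mem_delta hmem)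
  · -- homeomorphism
    let F : ↥(E.U1 n p) → ↥(E.U0 n q) :=
      fun xx => ⟨E.toFunD hq ht xx, E.toFunD_mem_U0 hq ht xx⟩
    let G : ↥(E.U0 n q) → ↥(E.U1 n p) :=
      fun yy => ⟨E.swap_s9.toFunD hp ht.symm ⟨yy.1, yy.2⟩,
        BratteliEmb.toFunD_mem_U0 E.swap_s9 hp ht.symm ⟨yy.1, yy.2⟩⟩
    have hGF : ∀ xx, G (F xx) = xx := by
      intro xx
      apply Subtype.ext; apply Subtype.ext
      have h1 : (xx.1, (F xx).1) ∈ E.delta n p q := E.toFunD_delta hq ht xx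
      have h2 : ((F xx).1, xx.1) ∈ E.swap_s9.delta n q p := by
        rw [BratteliEmb.delta_swap]; exact h1
      exact (BratteliEmb.eq_fwd_of_mem_delta h2).symm
    have hFG : ∀ yy, F (G yy) = yy := by
      intro yy
      apply Subtype.ext; apply Subtype.ext
      have h1 : (yy.1, (G yy).1) ∈ E.swap_s9.delta n q p :=
        E.swap_s9.toFunD_delta hp ht.symm ⟨yy.1, yy.2⟩
      have h2 : ((G yy).1, yy.1) ∈ E.delta n p q := by
        rw [BratteliEmb.delta_swap] at h1; exact h1
      exact (BratteliEmb.eq_fwd_of_mem_delta h2).symm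
    have hFc : Continuous F := by
      refine Continuous.subtype_mk (Continuous.subtype_mk ?_ _) _
      exact continuous_pi fun k =>
        (BratteliEmb.fwd_continuous k).comp continuous_subtype_val
    have hGc : Continuous G := by
      refine Continuous.subtype_mk (Continuous.subtype_mk ?_ _) _
      exact continuous_pi fun k =>
        (BratteliEmb.fwd_continuous (E := E.swap_s9) k).comp continuous_subtype_val
    exact ⟨⟨⟨F, G, hGF, hFG⟩, hFc, hGc⟩, fun xx => E.toFunD_delta hq ht xx⟩
  · -- relComp
    ext z
    constructor
    · rintro ⟨y, hzy, hzy'⟩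
      have hzy2 : (z.2, y) ∈ E.delta n p q := hzy'
      have he1 : (y, z.1) ∈ E.swap_s9.delta n q p := by
        rw [BratteliEmb.delta_swap]; exact hzy
      have he2 : (y, z.2) ∈ E.swap_s9.delta n q p := by
        rw [BratteliEmb.delta_swap]; exact hzy2
      have hz12 : z.1 = z.2 := Subtype.ext
        ((BratteliEmb.eq_fwd_of_mem_delta he1).trans
          (BratteliEmb.eq_fwd_of_mem_delta he2).symm)
      have hU : z.1 ∈ E.U1 n p := (hB1 (z.1, y) hzy).1
      obtain ⟨f, hf2⟩ := Set.mem_iUnion.mp hU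
      obtain ⟨hcond, hcyl⟩ := Set.mem_iUnion.mp hf2
      refine Set.mem_iUnion.mpr ⟨f, Set.mem_iUnion.mpr ⟨hcond, ?_⟩⟩
      exact ⟨fun k hk => ⟨hcyl k hk, by rw [← hz12]; exact hcyl k hk⟩,
        fun k _ => by rw [hz12]⟩
    · intro hz
      obtain ⟨f, hf2⟩ := Set.mem_iUnion.mp hz
      obtain ⟨hcond, hb1, hb2⟩ := Set.mem_iUnion.mp hf2
      have hz12 : z.1 = z.2 := by
        apply Subtype.ext; funext k
        rcases Nat.lt_or_ge k (n + 2) with h | h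
        · rw [(hb1 k h).1, (hb1 k h).2]
        · exact hb2 k h
      have ha : ∀ k, k ≤ n → z.1.1 k = p k := by
        intro k hk
        rw [(hb1 k (by omega)).1, Function.update_of_ne (by omega)]
      have hbx : ∃ g : B.E (n + 1), z.1.1 (n + 1) = E.xi1 (n + 1) g := by
        refine ⟨f, ?_⟩
        rw [(hb1 (n + 1) (by omega)).1, Function.update_self]
      have hmem : z.1 ∈ E.U1 n p := BratteliEmb.mem_U1 z.1 ha hbx
      refine ⟨E.toFunD hq ht ⟨z.1, hmem⟩, E.toFunD_delta hq ht ⟨z.1, hmem⟩, ?_⟩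
      show (z.2, E.toFunD hq ht ⟨z.1, hmem⟩) ∈ E.delta n p q
      rw [← hz12]
      exact E.toFunD_delta hq ht ⟨z.1, hmem⟩
  · -- disjointness
    intro f f' hf hf' hne
    rw [Set.disjoint_left]
    rintro z ⟨hb1, -⟩ ⟨hb1', -⟩
    have e1 : z.1.1 (n + 1) = E.xi1 (n + 1) f := by
      have h := (hb1 (n + 1) (by omega)).1
      rwa [Function.update_self] at h
    have e2 : z.1.1 (n + 1) = E.xi1 (n + 1) f' := by
      have h := (hb1' (n + 1) (by omega)).1
      rwa [Function.update_self] at h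
    exact hne (E.xi1_inj (n + 1) (e1.symm.trans e2))
end

section
/- Let (V,E) and (W,F) be Bratteli diagrams with embeddings ξ, ξ⁰, ξ¹ as specified, n ≥ 1 and (p,q) ∈ I_n^W. Then δ^{1,0}_{p,q} \ R_E = λ^{1,0}_{p,q} and δ^{0,1}_{q,p} \ R_E = λ^{0,1}_{q,p}, where λ^{0,1}_{q,p} = (λ^{1,0}_{p,q})⁻¹. -/
open MeasureTheory

/-- For `(p,q) ∈ I_n^W`: `δ^{1,0}_{p,q} \ R_E = λ^{1,0}_{p,q}` and
`δ^{0,1}_{q,p} \ R_E = λ^{0,1}_{q,p}`, where `λ^{0,1}_{q,p} = (λ^{1,0}_{p,q})⁻¹` and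
`δ^{0,1}_{q,p} = (δ^{1,0}_{p,q})⁻¹`. -/
theorem stmt10 (B D : Bratteli) (E : BratteliEmb B D) (n : ℕ) (p q : (k : ℕ) → D.E k)
    (hp : D.IsPath (n + 1) p) (hq : D.IsPath (n + 1) q)
    (ht : D.tgt n (p n) = D.tgt n (q n))
    (w : B.V (n + 1)) (hw : D.tgt n (p n) = E.xiV (n + 1) w) :
    E.delta n p q \ D.RE = E.lam n p q ∧
    relInv (E.delta n p q) \ D.RE = relInv (E.lam n p q) := by
  have hRE_symm : ∀ z : D.X × D.X, z ∈ D.RE → (z.2, z.1) ∈ D.RE := by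
    intro z hz
    simp only [Bratteli.RE, Set.mem_iUnion] at hz ⊢
    obtain ⟨N, P, Q, hP, hQ, hT, hβ⟩ := hz
    exact ⟨N, Q, P, hQ, hP, hT.symm,
      ⟨fun k hk => ⟨(hβ.1 k hk).2, (hβ.1 k hk).1⟩, fun k hk => (hβ.2 k hk).symm⟩⟩
  have hlam_RE : ∀ z : D.X × D.X, z ∈ E.lam n p q → z ∉ D.RE := by
    intro z hz hRE
    simp only [Bratteli.RE, Set.mem_iUnion] at hRE
    obtain ⟨N, P, Q, _, _, _, hβ⟩ := hRE
    obtain ⟨f, hf1, hf2⟩ := hz.2 (max (N + 1) (n + 1)) (le_max_right _ _)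
    have heq := hβ.2 (max (N + 1) (n + 1)) (le_max_left _ _)
    rw [hf1, hf2] at heq
    exact E.disjoint01 _ f f heq.symm
  have hsub : ∀ z : D.X × D.X, z ∈ E.delta n p q → z ∈ E.lam n p q ∨ z ∈ D.RE := by
    intro z hz
    rcases hz with (hz | hz) | hz
    · exact Or.inl hz
    · right
      obtain ⟨hpre, m, hmid, ⟨f, hf1, hf2⟩, htail⟩ := hz
      simp only [Bratteli.RE, Set.mem_iUnion]
      refine ⟨n + m + 2, z.1.1, z.2.1, fun k _ => z.1.2 k, fun k _ => z.2.2 k, ?_, ?_⟩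
      · rw [hf1, hf2, E.tgt_xi0, E.tgt_xi1]
      · exact ⟨fun k _ => ⟨rfl, rfl⟩, fun k hk => htail k (by omega)⟩
    · right
      obtain ⟨hpre, m, hmid, hnot, htail⟩ := hz
      simp only [Bratteli.RE, Set.mem_iUnion]
      refine ⟨n + m + 2, z.1.1, z.2.1, fun k _ => z.1.2 k, fun k _ => z.2.2 k, ?_, ?_⟩
      · rw [htail (n + m + 2) le_rfl]
      · exact ⟨fun k _ => ⟨rfl, rfl⟩, fun k hk => htail k (by omega)⟩
  have h1 : E.delta n p q \ D.RE = E.lam n p q := by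
    ext z
    constructor
    · rintro ⟨hd, hn⟩
      rcases hsub z hd with h | h
      · exact h
      · exact absurd h hn
    · intro hz
      exact ⟨Or.inl (Or.inl hz), hlam_RE z hz⟩
  refine ⟨h1, ?_⟩
  ext z
  constructor
  · rintro ⟨hd, hn⟩
    have hmem : (z.2, z.1) ∈ E.delta n p q \ D.RE :=
      ⟨hd, fun h => hn (hRE_symm _ h)⟩
    rw [h1] at hmem
    exact hmem
  · intro hz
    have hmem : (z.2, z.1) ∈ E.lam n p q := hz
    rw [← h1] at hmem
    exact ⟨hmem.1, fun h => hmem.2 (hRE_symm _ h)⟩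
end

section
/- Let (V,E) and (W,F) be Bratteli diagrams with embeddings ξ, ξ⁰, ξ¹ as specified, n ≥ 1 and (p,q) ∈ I_n^W with t(p) = ξ(w). Set A = {f ∈ F_{n+1} : i(f) = w}, B = {(f,f') ∈ F_{n+1} × F_{n+2} : i(f) = w, t(f) = i(f')}, and C = {(f,e) ∈ F_{n+1} × E_{n+2} : i(f) = w, ξ(t(f)) = i(e), e ∉ ξ⁰(F_{n+2}) ∪ ξ¹(F_{n+2})}. Then δ^{1,0}_{p,q} = (⋃_{f ∈ A} δ^{1,0}_{p·ξ¹(f), q·ξ⁰(f)}) ∪ (⋃_{(f,f') ∈ B} β_{p·ξ¹(f)·ξ⁰(f'), q·ξ⁰(f)·ξ¹(f')}) ∪ (⋃_{(f,e) ∈ C} β_{p·ξ¹(f)·e, q·ξ⁰(f)·e}), and these three sets are pairwise disjoint. -/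
open MeasureTheory

namespace BratteliEmb

variable {B D : Bratteli} (E : BratteliEmb B D)

/-- `⋃_{f ∈ A} δ^{1,0}_{p·ξ¹(f), q·ξ⁰(f)}` where `A = {f ∈ F_{n+1} : i(f) = w}`. -/
def deltaPieceA (n : ℕ) (p q : (k : ℕ) → D.E k) (w : B.V (n + 1)) : Set (D.X × D.X) :=
  ⋃ (f : B.E (n + 1)) (_ : B.src (n + 1) f = w),
    E.delta (n + 1) (Function.update p (n + 1) (E.xi1 (n + 1) f))
      (Function.update q (n + 1) (E.xi0 (n + 1) f))

/-- `⋃_{(f,f') ∈ B} β_{p·ξ¹(f)·ξ⁰(f'), q·ξ⁰(f)·ξ¹(f')}` where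
`B = {(f,f') ∈ F_{n+1} × F_{n+2} : i(f) = w, t(f) = i(f')}`. -/
def deltaPieceB (n : ℕ) (p q : (k : ℕ) → D.E k) (w : B.V (n + 1)) : Set (D.X × D.X) :=
  ⋃ (f : B.E (n + 1)) (f' : B.E (n + 2))
    (_ : B.src (n + 1) f = w) (_ : B.tgt (n + 1) f = B.src (n + 2) f'),
    D.beta (n + 3)
      (Function.update (Function.update p (n + 1) (E.xi1 (n + 1) f)) (n + 2) (E.xi0 (n + 2) f'))
      (Function.update (Function.update q (n + 1) (E.xi0 (n + 1) f)) (n + 2) (E.xi1 (n + 2) f'))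

/-- `⋃_{(f,e) ∈ C} β_{p·ξ¹(f)·e, q·ξ⁰(f)·e}` where
`C = {(f,e) ∈ F_{n+1} × E_{n+2} : i(f) = w, i(e) = ξ(t(f)), e ∉ ξ⁰(F_{n+2}) ∪ ξ¹(F_{n+2})}`. -/
def deltaPieceC (n : ℕ) (p q : (k : ℕ) → D.E k) (w : B.V (n + 1)) : Set (D.X × D.X) :=
  ⋃ (f : B.E (n + 1)) (e : D.E (n + 2))
    (_ : B.src (n + 1) f = w) (_ : D.src (n + 2) e = E.xiV (n + 2) (B.tgt (n + 1) f))
    (_ : ∀ g : B.E (n + 2), e ≠ E.xi0 (n + 2) g ∧ e ≠ E.xi1 (n + 2) g),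
    D.beta (n + 3)
      (Function.update (Function.update p (n + 1) (E.xi1 (n + 1) f)) (n + 2) e)
      (Function.update (Function.update q (n + 1) (E.xi0 (n + 1) f)) (n + 2) e)

end BratteliEmb

namespace BratteliEmb

variable {B D : Bratteli} (E : BratteliEmb B D)

/-- Coordinate `n+2` of any element of piece `A` is a matched `(ξ¹,ξ⁰)` pair. -/
lemma mem_deltaPieceA_coord {n : ℕ} {p q : (k : ℕ) → D.E k} {w : B.V (n + 1)}
    {z : D.X × D.X} (hz : z ∈ E.deltaPieceA n p q w) :
    ∃ g : B.E (n + 2), z.1.1 (n + 2) = E.xi1 (n + 2) g ∧ z.2.1 (n + 2) = E.xi0 (n + 2) g := by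
  simp only [deltaPieceA, Set.mem_iUnion] at hz
  obtain ⟨f, hfw, hz⟩ := hz
  simp only [delta, Set.mem_union, Set.mem_setOf_eq] at hz
  rcases hz with (⟨hpre, htail⟩ | ⟨hpre, m, hmid, _, _⟩) | ⟨hpre, m, hmid, _, _⟩
  · exact htail (n + 2) (by omega)
  · exact hmid (n + 2) (by omega) (by omega)
  · exact hmid (n + 2) (by omega) (by omega)

/-- Coordinate `n+2` of any element of piece `B` is a swapped `(ξ⁰,ξ¹)` pair. -/
lemma mem_deltaPieceB_coord {n : ℕ} {p q : (k : ℕ) → D.E k} {w : B.V (n + 1)}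
    {z : D.X × D.X} (hz : z ∈ E.deltaPieceB n p q w) :
    ∃ g : B.E (n + 2), z.1.1 (n + 2) = E.xi0 (n + 2) g ∧ z.2.1 (n + 2) = E.xi1 (n + 2) g := by
  simp only [deltaPieceB, Set.mem_iUnion] at hz
  obtain ⟨f, f', hfw, hcomp, hz⟩ := hz
  obtain ⟨h1, h2⟩ := hz.1 (n + 2) (by omega)
  refine ⟨f', ?_, ?_⟩
  · rw [h1, Function.update_self]
  · rw [h2, Function.update_self]

/-- Coordinate `n+2` of any element of piece `C` avoids the images of `ξ⁰` and `ξ¹`. -/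
lemma mem_deltaPieceC_coord {n : ℕ} {p q : (k : ℕ) → D.E k} {w : B.V (n + 1)}
    {z : D.X × D.X} (hz : z ∈ E.deltaPieceC n p q w) :
    ∀ g : B.E (n + 2), z.1.1 (n + 2) ≠ E.xi0 (n + 2) g ∧ z.1.1 (n + 2) ≠ E.xi1 (n + 2) g := by
  simp only [deltaPieceC, Set.mem_iUnion] at hz
  obtain ⟨f, e, hfw, hsrc, he, hz⟩ := hz
  have h1 : z.1.1 (n + 2) = e := by
    rw [(hz.1 (n + 2) (by omega)).1, Function.update_self]
  rw [h1]; exact he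

end BratteliEmb

/-- For `(p,q) ∈ I_n^W` with `t(p) = ξ(w)`, the set `δ^{1,0}_{p,q}`
decomposes as the disjoint union of the three families indexed by `A`, `B`, `C`. -/
theorem stmt11 (B D : Bratteli) (E : BratteliEmb B D) (n : ℕ) (p q : (k : ℕ) → D.E k)
    (hp : D.IsPath (n + 1) p) (hq : D.IsPath (n + 1) q)
    (ht : D.tgt n (p n) = D.tgt n (q n))
    (w : B.V (n + 1)) (hw : D.tgt n (p n) = E.xiV (n + 1) w) :
    E.delta n p q = E.deltaPieceA n p q w ∪ E.deltaPieceB n p q w ∪ E.deltaPieceC n p q w ∧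
    Disjoint (E.deltaPieceA n p q w) (E.deltaPieceB n p q w) ∧
    Disjoint (E.deltaPieceA n p q w) (E.deltaPieceC n p q w) ∧
    Disjoint (E.deltaPieceB n p q w) (E.deltaPieceC n p q w) := by
  refine ⟨?_, ?_, ?_, ?_⟩
  · ext z
    simp only [Set.mem_union]
    constructor
    · intro hz
      simp only [BratteliEmb.delta, Set.mem_union, Set.mem_setOf_eq] at hz
      -- extract the common prefix and the matched pair at coordinate `n+1`
      obtain ⟨hpre, f, hf1, hf2⟩ :
          (∀ k, k < n + 1 → z.1.1 k = p k ∧ z.2.1 k = q k) ∧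
          ∃ f : B.E (n + 1), z.1.1 (n + 1) = E.xi1 (n + 1) f ∧
            z.2.1 (n + 1) = E.xi0 (n + 1) f := by
        rcases hz with (⟨hpre, htail⟩ | ⟨hpre, m, hmid, _, _⟩) | ⟨hpre, m, hmid, _, _⟩
        · exact ⟨hpre, htail (n + 1) le_rfl⟩
        · exact ⟨hpre, hmid (n + 1) le_rfl (by omega)⟩
        · exact ⟨hpre, hmid (n + 1) le_rfl (by omega)⟩
      have hfw : B.src (n + 1) f = w := by
        apply E.xiV_inj (n + 1)
        rw [← E.src_xi1, ← hf1, ← z.1.2 n, (hpre n (by omega)).1, hw]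
      have hpre' : ∀ k, k < n + 2 →
          z.1.1 k = Function.update p (n + 1) (E.xi1 (n + 1) f) k ∧
          z.2.1 k = Function.update q (n + 1) (E.xi0 (n + 1) f) k := by
        intro k hk
        rcases Nat.lt_or_ge k (n + 1) with h | h
        · rw [Function.update_of_ne (by omega), Function.update_of_ne (by omega)]
          exact hpre k h
        · have hk1 : k = n + 1 := by omega
          subst hk1
          rw [Function.update_self, Function.update_self]
          exact ⟨hf1, hf2⟩
      rcases hz with (⟨_, htail⟩ | ⟨_, m, hmid, hswap, htail⟩) | ⟨_, m, hmid, hnot, htail⟩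
      · -- λ-case: goes into piece A
        left; left
        simp only [BratteliEmb.deltaPieceA, Set.mem_iUnion]
        refine ⟨f, hfw, ?_⟩
        simp only [BratteliEmb.delta, Set.mem_union, Set.mem_setOf_eq]
        exact Or.inl (Or.inl ⟨hpre', fun k hk => htail k (by omega)⟩)
      · rcases m with _ | m'
        · -- swap right after `n+1`: goes into piece B
          obtain ⟨f', hg1, hg2⟩ := hswap
          have hcomp : B.tgt (n + 1) f = B.src (n + 2) f' := by
            apply E.xiV_inj (n + 2)
            rw [← E.tgt_xi1, ← hf1, z.1.2 (n + 1), hg1, E.src_xi0]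
          left; right
          simp only [BratteliEmb.deltaPieceB, Set.mem_iUnion]
          refine ⟨f, f', hfw, hcomp, ?_⟩
          refine ⟨?_, fun k hk => htail k (by omega)⟩
          intro k hk
          rcases Nat.lt_or_ge k (n + 1) with h | h
          · rw [Function.update_of_ne (by omega : k ≠ n + 2),
              Function.update_of_ne (by omega : k ≠ n + 1),
              Function.update_of_ne (by omega : k ≠ n + 2),
              Function.update_of_ne (by omega : k ≠ n + 1)]
            exact hpre k h
          · rcases Nat.lt_or_ge k (n + 2) with h2 | h2
            · have hk1 : k = n + 1 := by omega
              subst hk1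
              rw [Function.update_of_ne (by omega : n + 1 ≠ n + 2), Function.update_self,
                Function.update_of_ne (by omega : n + 1 ≠ n + 2), Function.update_self]
              exact ⟨hf1, hf2⟩
            · have hk2 : k = n + 2 := by omega
              subst hk2
              rw [Function.update_self, Function.update_self]
              exact ⟨hg1, hg2⟩
        · -- swap later: goes into piece A
          left; left
          simp only [BratteliEmb.deltaPieceA, Set.mem_iUnion]
          refine ⟨f, hfw, ?_⟩
          simp only [BratteliEmb.delta, Set.mem_union, Set.mem_setOf_eq]
          refine Or.inl (Or.inr ⟨hpre', m', ?_, ?_, ?_⟩)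
          · intro k hk1 hk2
            exact hmid k (by omega) (by omega)
          · rw [show n + 1 + m' + 2 = n + (m' + 1) + 2 from by omega]
            exact hswap
          · intro k hk
            exact htail k (by omega)
      · rcases m with _ | m'
        · -- off-image edge right after `n+1`: goes into piece C
          have hsrc_e : D.src (n + 2) (z.1.1 (n + 2)) = E.xiV (n + 2) (B.tgt (n + 1) f) := by
            rw [← z.1.2 (n + 1), hf1, E.tgt_xi1]
          right
          simp only [BratteliEmb.deltaPieceC, Set.mem_iUnion]
          refine ⟨f, z.1.1 (n + 2), hfw, hsrc_e, hnot, ?_, fun k hk => htail k (by omega)⟩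
          intro k hk
          rcases Nat.lt_or_ge k (n + 1) with h | h
          · rw [Function.update_of_ne (by omega : k ≠ n + 2),
              Function.update_of_ne (by omega : k ≠ n + 1),
              Function.update_of_ne (by omega : k ≠ n + 2),
              Function.update_of_ne (by omega : k ≠ n + 1)]
            exact hpre k h
          · rcases Nat.lt_or_ge k (n + 2) with h2 | h2
            · have hk1 : k = n + 1 := by omega
              subst hk1
              rw [Function.update_of_ne (by omega : n + 1 ≠ n + 2), Function.update_self,
                Function.update_of_ne (by omega : n + 1 ≠ n + 2), Function.update_self]
              exact ⟨hf1, hf2⟩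
            · have hk2 : k = n + 2 := by omega
              subst hk2
              rw [Function.update_self, Function.update_self]
              exact ⟨rfl, (htail (n + 2) (by omega)).symm⟩
        · -- off-image edge later: goes into piece A
          left; left
          simp only [BratteliEmb.deltaPieceA, Set.mem_iUnion]
          refine ⟨f, hfw, ?_⟩
          simp only [BratteliEmb.delta, Set.mem_union, Set.mem_setOf_eq]
          refine Or.inr ⟨hpre', m', ?_, ?_, ?_⟩
          · intro k hk1 hk2
            exact hmid k (by omega) (by omega)
          · rw [show n + 1 + m' + 2 = n + (m' + 1) + 2 from by omega]
            exact hnot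
          · intro k hk
            exact htail k (by omega)
    · intro hz
      simp only [BratteliEmb.delta, Set.mem_union, Set.mem_setOf_eq]
      rcases hz with (hA | hB) | hC
      · -- piece A ⊆ δ
        simp only [BratteliEmb.deltaPieceA, Set.mem_iUnion] at hA
        obtain ⟨f, hfw, hz⟩ := hA
        simp only [BratteliEmb.delta, Set.mem_union, Set.mem_setOf_eq] at hz
        rcases hz with (⟨hpre, htail⟩ | ⟨hpre, m', hmid, hswap, htail⟩)
          | ⟨hpre, m', hmid, hnot, htail⟩
        · refine Or.inl (Or.inl ⟨?_, ?_⟩)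
          · intro k hk
            have h := hpre k (by omega)
            rwa [Function.update_of_ne (by omega : k ≠ n + 1),
              Function.update_of_ne (by omega : k ≠ n + 1)] at h
          · intro k hk
            rcases Nat.lt_or_ge k (n + 2) with h2 | h2
            · have hk1 : k = n + 1 := by omega
              subst hk1
              have h := hpre (n + 1) (by omega)
              rw [Function.update_self, Function.update_self] at h
              exact ⟨f, h⟩
            · exact htail k h2
        · refine Or.inl (Or.inr ⟨?_, m' + 1, ?_, ?_, ?_⟩)
          · intro k hk
            have h := hpre k (by omega)
            rwa [Function.update_of_ne (by omega : k ≠ n + 1),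
              Function.update_of_ne (by omega : k ≠ n + 1)] at h
          · intro k hk1 hk2
            rcases Nat.lt_or_ge k (n + 2) with h2 | h2
            · have hk1 : k = n + 1 := by omega
              subst hk1
              have h := hpre (n + 1) (by omega)
              rw [Function.update_self, Function.update_self] at h
              exact ⟨f, h⟩
            · exact hmid k (by omega) (by omega)
          · rw [show n + (m' + 1) + 2 = n + 1 + m' + 2 from by omega]
            exact hswap
          · intro k hk
            exact htail k (by omega)
        · refine Or.inr ⟨?_, m' + 1, ?_, ?_, ?_⟩
          · intro k hk
            have h := hpre k (by omega)
            rwa [Function.update_of_ne (by omega : k ≠ n + 1),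
              Function.update_of_ne (by omega : k ≠ n + 1)] at h
          · intro k hk1 hk2
            rcases Nat.lt_or_ge k (n + 2) with h2 | h2
            · have hk1 : k = n + 1 := by omega
              subst hk1
              have h := hpre (n + 1) (by omega)
              rw [Function.update_self, Function.update_self] at h
              exact ⟨f, h⟩
            · exact hmid k (by omega) (by omega)
          · rw [show n + (m' + 1) + 2 = n + 1 + m' + 2 from by omega]
            exact hnot
          · intro k hk
            exact htail k (by omega)
      · -- piece B ⊆ δ
        simp only [BratteliEmb.deltaPieceB, Set.mem_iUnion] at hB
        obtain ⟨f, f', hfw, hcomp, hbeta⟩ := hB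
        refine Or.inl (Or.inr ⟨?_, 0, ?_, ?_, ?_⟩)
        · intro k hk
          have h := hbeta.1 k (by omega)
          rwa [Function.update_of_ne (by omega : k ≠ n + 2),
            Function.update_of_ne (by omega : k ≠ n + 1),
            Function.update_of_ne (by omega : k ≠ n + 2),
            Function.update_of_ne (by omega : k ≠ n + 1)] at h
        · intro k hk1 hk2
          have hk1 : k = n + 1 := by omega
          subst hk1
          have h := hbeta.1 (n + 1) (by omega)
          rw [Function.update_of_ne (by omega : n + 1 ≠ n + 2), Function.update_self,
            Function.update_of_ne (by omega : n + 1 ≠ n + 2), Function.update_self] at h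
          exact ⟨f, h⟩
        · have h := hbeta.1 (n + 2) (by omega)
          rw [Function.update_self, Function.update_self] at h
          exact ⟨f', h⟩
        · intro k hk
          exact hbeta.2 k (by omega)
      · -- piece C ⊆ δ
        simp only [BratteliEmb.deltaPieceC, Set.mem_iUnion] at hC
        obtain ⟨f, e, hfw, hsrc_e, he, hbeta⟩ := hC
        have h2 := hbeta.1 (n + 2) (by omega)
        rw [Function.update_self, Function.update_self] at h2
        refine Or.inr ⟨?_, 0, ?_, ?_, ?_⟩
        · intro k hk
          have h := hbeta.1 k (by omega)
          rwa [Function.update_of_ne (by omega : k ≠ n + 2),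
            Function.update_of_ne (by omega : k ≠ n + 1),
            Function.update_of_ne (by omega : k ≠ n + 2),
            Function.update_of_ne (by omega : k ≠ n + 1)] at h
        · intro k hk1 hk2
          have hk1 : k = n + 1 := by omega
          subst hk1
          have h := hbeta.1 (n + 1) (by omega)
          rw [Function.update_of_ne (by omega : n + 1 ≠ n + 2), Function.update_self,
            Function.update_of_ne (by omega : n + 1 ≠ n + 2), Function.update_self] at h
          exact ⟨f, h⟩
        · intro g
          rw [h2.1]
          exact he g
        · intro k hk
          rcases Nat.lt_or_ge k (n + 3) with h3 | h3
          · have hk2 : k = n + 2 := by omega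
            subst hk2
            rw [h2.1, h2.2]
          · exact hbeta.2 k h3
  · rw [Set.disjoint_left]
    intro z hzA hzB
    obtain ⟨g, hg1, -⟩ := E.mem_deltaPieceA_coord hzA
    obtain ⟨g', hg1', -⟩ := E.mem_deltaPieceB_coord hzB
    exact E.disjoint01 (n + 2) g' g (by rw [← hg1, ← hg1'])
  · rw [Set.disjoint_left]
    intro z hzA hzC
    obtain ⟨g, hg1, -⟩ := E.mem_deltaPieceA_coord hzA
    exact (E.mem_deltaPieceC_coord hzC g).2 hg1
  · rw [Set.disjoint_left]
    intro z hzB hzC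
    obtain ⟨g', hg1', -⟩ := E.mem_deltaPieceB_coord hzB
    exact (E.mem_deltaPieceC_coord hzC g').1 hg1'
end

section
/- Let (V,E) and (W,F) be Bratteli diagrams with embeddings ξ, ξ⁰, ξ¹ as specified, and let R = R_E ∪ ⋃_{n≥1} ⋃_{(p,q)∈I_n^W} (δ^{1,0}_{p,q} ∪ δ^{0,1}_{q,p}). Then R is an equivalence relation on X_E containing R_E. If, moreover, for every n ≥ 0, every v ∈ V_n and every v' ∈ V_{n+1} there is at least one edge e ∈ E_{n+1} with i(e) = v and t(e) = v', then R is minimal: every R-equivalence class is dense in X_E. -/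
open MeasureTheory

section Aux

open Filter Topology

namespace BratteliEmb

variable {B D : Bratteli} (E : BratteliEmb B D)

/-- Eventual agreement. -/
def Ev (x y : D.X) : Prop := ∃ N, ∀ k, N ≤ k → x.1 k = y.1 k

/-- Eventually `(ξ¹, ξ⁰)`-matched. -/
def L10 (x y : D.X) : Prop :=
  ∃ N, ∀ k, N ≤ k → ∃ f : B.E k, x.1 k = E.xi1 k f ∧ y.1 k = E.xi0 k f

lemma isPath_val (x : D.X) (n : ℕ) : D.IsPath n x.1 := fun k _ => x.2 k

lemma mem_RE_of_ev {x y : D.X} (h : Ev x y) : (x, y) ∈ D.RE := by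
  obtain ⟨N, hN⟩ := h
  simp only [Bratteli.RE, Set.mem_iUnion]
  refine ⟨N, x.1, y.1, isPath_val x _, isPath_val y _, ?_, ?_⟩
  · rw [hN N le_rfl]
  · exact ⟨fun k _ => ⟨rfl, rfl⟩, fun k hk => hN k (by omega)⟩

lemma mem_lam_self {x y : D.X} {N : ℕ}
    (hN : ∀ k, N ≤ k → ∃ f : B.E k, x.1 k = E.xi1 k f ∧ y.1 k = E.xi0 k f) :
    (x, y) ∈ E.lam N x.1 y.1 :=
  ⟨fun k _ => ⟨rfl, rfl⟩, fun k hk => hN k (by omega)⟩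

lemma side_conditions {x y : D.X} {N : ℕ}
    (hN : ∀ k, N ≤ k → ∃ f : B.E k, x.1 k = E.xi1 k f ∧ y.1 k = E.xi0 k f) :
    D.tgt N (x.1 N) = D.tgt N (y.1 N) ∧
      ∃ w : B.V (N + 1), D.tgt N (x.1 N) = E.xiV (N + 1) w := by
  obtain ⟨f, hf1, hf2⟩ := hN (N + 1) (by omega)
  constructor
  · rw [x.2 N, y.2 N, hf1, hf2, E.src_xi1, E.src_xi0]
  · exact ⟨B.src (N + 1) f, by rw [x.2 N, hf1, E.src_xi1]⟩

lemma mem_Rfull_of_L10 {x y : D.X} (h : L10 E x y) : (x, y) ∈ E.Rfull := by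
  obtain ⟨N, hN⟩ := h
  obtain ⟨h1, h2⟩ := E.side_conditions hN
  refine Set.mem_union_right _ ?_
  simp only [Set.mem_iUnion]
  exact ⟨N, x.1, y.1, isPath_val x _, isPath_val y _, h1, h2,
    Set.mem_union_left _ (Set.mem_union_left _ (Set.mem_union_left _ (E.mem_lam_self hN)))⟩

lemma mem_Rfull_of_L10_inv {x y : D.X} (h : L10 E y x) : (x, y) ∈ E.Rfull := by
  obtain ⟨N, hN⟩ := h
  obtain ⟨h1, h2⟩ := E.side_conditions hN
  refine Set.mem_union_right _ ?_
  simp only [Set.mem_iUnion]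
  refine ⟨N, y.1, x.1, isPath_val y _, isPath_val x _, h1, h2, Set.mem_union_right _ ?_⟩
  exact Set.mem_union_left _ (Set.mem_union_left _ (E.mem_lam_self hN))

lemma of_delta {x y : D.X} {n : ℕ} {p q : (k : ℕ) → D.E k}
    (h : (x, y) ∈ E.delta n p q) : Ev x y ∨ L10 E x y := by
  rcases h with (h | h) | h
  · exact Or.inr ⟨n + 1, h.2⟩
  · obtain ⟨-, m, -, -, h3⟩ := h
    exact Or.inl ⟨n + m + 3, fun k hk => h3 k (by omega)⟩
  · obtain ⟨-, m, -, -, h3⟩ := h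
    exact Or.inl ⟨n + m + 2, fun k hk => h3 k hk⟩

lemma mem_Rfull_iff {x y : D.X} :
    (x, y) ∈ E.Rfull ↔ Ev x y ∨ L10 E x y ∨ L10 E y x := by
  constructor
  · intro h
    rcases h with h | h
    · simp only [Bratteli.RE, Set.mem_iUnion] at h
      obtain ⟨n, p, q, -, -, -, hb⟩ := h
      exact Or.inl ⟨n + 1, hb.2⟩
    · simp only [Set.mem_iUnion] at h
      obtain ⟨n, p, q, -, -, -, -, h⟩ := h
      rcases h with h | h
      · rcases E.of_delta h with h | h
        · exact Or.inl h
        · exact Or.inr (Or.inl h)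
      · rcases E.of_delta (h : (y, x) ∈ E.delta n p q) with h | h
        · obtain ⟨N, hN⟩ := h
          exact Or.inl ⟨N, fun k hk => (hN k hk).symm⟩
        · exact Or.inr (Or.inr h)
  · rintro (h | h | h)
    · exact Set.mem_union_left _ (mem_RE_of_ev h)
    · exact E.mem_Rfull_of_L10 h
    · exact E.mem_Rfull_of_L10_inv h

lemma exists_approx (hE : ∀ (n : ℕ) (v : D.V n) (v' : D.V (n + 1)),
      ∃ e : D.E n, D.src n e = v ∧ D.tgt n e = v') (x x' : D.X) (m : ℕ) :
    ∃ y : D.X, (∀ k, k < m → y.1 k = x'.1 k) ∧ Ev x y := by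
  classical
  cases m with
  | zero => exact ⟨x, fun k hk => absurd hk (by omega), 0, fun k _ => rfl⟩
  | succ j =>
    obtain ⟨e, he1, he2⟩ := hE (j + 1) (D.tgt j (x'.1 j)) (D.src (j + 2) (x.1 (j + 2)))
    refine ⟨⟨Function.update (fun k => if k < j + 1 then x'.1 k else x.1 k) (j + 1) e,
      ?_⟩, ?_, ?_⟩
    · intro n
      rcases lt_trichotomy n j with hn | hn | hn
      · rw [Function.update_of_ne (by omega), Function.update_of_ne (by omega),
          if_pos (by omega), if_pos (by omega)]
        exact x'.2 n
      · subst hn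
        rw [Function.update_of_ne (by omega), Function.update_self, if_pos (by omega)]
        exact he1.symm
      · by_cases hn2 : n = j + 1
        · subst hn2
          rw [Function.update_self, Function.update_of_ne (by omega), if_neg (by omega)]
          exact he2
        · rw [Function.update_of_ne (by omega), Function.update_of_ne (by omega),
            if_neg (by omega), if_neg (by omega)]
          exact x.2 n
    · intro k hk
      show Function.update (fun k => if k < j + 1 then x'.1 k else x.1 k) (j + 1) e k = _
      rw [Function.update_of_ne (show k ≠ j + 1 by omega), if_pos hk]
    · refine ⟨j + 2, fun k hk => ?_⟩
      show _ = Function.update (fun k => if k < j + 1 then x'.1 k else x.1 k) (j + 1) e k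
      rw [Function.update_of_ne (show k ≠ j + 1 by omega), if_neg (by omega)]

end BratteliEmb

end Aux

/-- `R = R_E ∪ ⋃ (δ^{1,0}_{p,q} ∪ δ^{0,1}_{q,p})` is an equivalence
relation on `X_E` containing `R_E`; and if between every vertex at consecutive levels of
`(V,E)` there is at least one edge, then `R` is minimal: every `R`-class is dense. -/
theorem stmt12 (B D : Bratteli) (E : BratteliEmb B D) :
    D.RE ⊆ E.Rfull ∧
    (∀ x : D.X, (x, x) ∈ E.Rfull) ∧
    (∀ x y : D.X, (x, y) ∈ E.Rfull → (y, x) ∈ E.Rfull) ∧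
    (∀ x y z : D.X, (x, y) ∈ E.Rfull → (y, z) ∈ E.Rfull → (x, z) ∈ E.Rfull) ∧
    ((∀ (n : ℕ) (v : D.V n) (v' : D.V (n + 1)),
        ∃ e : D.E n, D.src n e = v ∧ D.tgt n e = v') →
      ∀ x : D.X, Dense { y : D.X | (x, y) ∈ E.Rfull }) := by
  refine ⟨Set.subset_union_left, ?_, ?_, ?_, ?_⟩
  · intro x
    exact (E.mem_Rfull_iff).2 (Or.inl ⟨0, fun k _ => rfl⟩)
  · intro x y h
    rcases (E.mem_Rfull_iff).1 h with h | h | h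
    · obtain ⟨N, hN⟩ := h
      exact (E.mem_Rfull_iff).2 (Or.inl ⟨N, fun k hk => (hN k hk).symm⟩)
    · exact (E.mem_Rfull_iff).2 (Or.inr (Or.inr h))
    · exact (E.mem_Rfull_iff).2 (Or.inr (Or.inl h))
  · intro x y z hxy hyz
    refine (E.mem_Rfull_iff).2 ?_
    rcases (E.mem_Rfull_iff).1 hxy with ⟨N1, h1⟩ | ⟨N1, h1⟩ | ⟨N1, h1⟩ <;>
      rcases (E.mem_Rfull_iff).1 hyz with ⟨N2, h2⟩ | ⟨N2, h2⟩ | ⟨N2, h2⟩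
    · exact Or.inl ⟨max N1 N2, fun k hk =>
        (h1 k (le_trans (le_max_left _ _) hk)).trans (h2 k (le_trans (le_max_right _ _) hk))⟩
    · refine Or.inr (Or.inl ⟨max N1 N2, fun k hk => ?_⟩)
      obtain ⟨f, hf1, hf2⟩ := h2 k (le_trans (le_max_right _ _) hk)
      exact ⟨f, (h1 k (le_trans (le_max_left _ _) hk)).trans hf1, hf2⟩
    · refine Or.inr (Or.inr ⟨max N1 N2, fun k hk => ?_⟩)
      obtain ⟨f, hf1, hf2⟩ := h2 k (le_trans (le_max_right _ _) hk)
      exact ⟨f, hf1, (h1 k (le_trans (le_max_left _ _) hk)).trans hf2⟩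
    · refine Or.inr (Or.inl ⟨max N1 N2, fun k hk => ?_⟩)
      obtain ⟨f, hf1, hf2⟩ := h1 k (le_trans (le_max_left _ _) hk)
      exact ⟨f, hf1, (h2 k (le_trans (le_max_right _ _) hk)).symm.trans hf2⟩
    · exfalso
      obtain ⟨f, -, hf2⟩ := h1 (max N1 N2) (le_max_left _ _)
      obtain ⟨g, hg1, -⟩ := h2 (max N1 N2) (le_max_right _ _)
      exact E.disjoint01 _ f g (hf2.symm.trans hg1)
    · refine Or.inl ⟨max N1 N2, fun k hk => ?_⟩
      obtain ⟨f, hf1, hf2⟩ := h1 k (le_trans (le_max_left _ _) hk)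
      obtain ⟨g, hg1, hg2⟩ := h2 k (le_trans (le_max_right _ _) hk)
      have : f = g := E.xi0_inj k (hf2.symm.trans hg2)
      rw [hf1, hg1, this]
    · -- L10 y x, Ev y z : z ↦ x is L10
      refine Or.inr (Or.inr ⟨max N1 N2, fun k hk => ?_⟩)
      obtain ⟨f, hf1, hf2⟩ := h1 k (le_trans (le_max_left _ _) hk)
      exact ⟨f, (h2 k (le_trans (le_max_right _ _) hk)).symm.trans hf1, hf2⟩
    · refine Or.inl ⟨max N1 N2, fun k hk => ?_⟩
      obtain ⟨f, hf1, hf2⟩ := h1 k (le_trans (le_max_left _ _) hk)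
      obtain ⟨g, hg1, hg2⟩ := h2 k (le_trans (le_max_right _ _) hk)
      have : f = g := E.xi1_inj k (hf1.symm.trans hg1)
      rw [hf2, hg2, this]
    · exfalso
      obtain ⟨f, hf1, -⟩ := h1 (max N1 N2) (le_max_left _ _)
      obtain ⟨g, -, hg2⟩ := h2 (max N1 N2) (le_max_right _ _)
      exact E.disjoint01 _ g f (hg2.symm.trans hf1)
  · intro hE x
    intro x'
    choose y hy1 hy2 using fun m => BratteliEmb.exists_approx hE x x' m
    have hmem : ∀ m, y m ∈ { y : D.X | (x, y) ∈ E.Rfull } := fun m =>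
      (E.mem_Rfull_iff).2 (Or.inl (hy2 m))
    have htt : Filter.Tendsto y Filter.atTop (nhds x') := by
      rw [show (nhds x' : Filter D.X) = nhds x' from rfl]
      apply tendsto_subtype_rng.2
      rw [tendsto_pi_nhds]
      intro i
      apply tendsto_nhds_of_eventually_eq
      rw [Filter.eventually_atTop]
      exact ⟨i + 1, fun m hm => hy1 m i (by omega)⟩
    exact mem_closure_of_tendsto htt (Filter.Eventually.of_forall hmem)
end

section
/- Let (V,E) and (W,F) be Bratteli diagrams with embeddings ξ, ξ⁰, ξ¹ as specified, and for n ≥ 1 let R_n = ⋃_{(p,q)∈I_n} β_{p,q} ∪ ⋃_{(p,q)∈I_n^W} (δ^{1,0}_{p,q} ∪ δ^{0,1}_{q,p}). Then R_n is an equivalence relation on X_E, and for every x ∈ X_E the R_n-equivalence class of x has cardinality 2·#{p ∈ E_{0,n} : t(p) = t(x_n)} if x_{n+1} ∈ ξ⁰(F_{n+1}) ∪ ξ¹(F_{n+1}), and cardinality #{p ∈ E_{0,n} : t(p) = t(x_n)} otherwise. -/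
open MeasureTheory

/-- The finite paths in `E_{0,n+1}` (edges at levels `0,…,n`), as genuine finite data. -/
def Bratteli.FinPaths (D : Bratteli) (n : ℕ) : Type :=
  { p : (k : Fin (n + 1)) → D.E k //
    ∀ (k : ℕ) (h : k + 1 < n + 1),
      D.tgt k (p ⟨k, Nat.lt_of_succ_lt h⟩) = D.src (k + 1) (p ⟨k + 1, h⟩) }
namespace Stmt14Aux

variable {B D : Bratteli}

/-- Equal tails from coordinate `n+1` on. -/
def Tl (n : ℕ) (x y : D.X) : Prop := ∀ k, n + 1 ≤ k → x.1 k = y.1 k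

lemma Tl.refl (n : ℕ) (x : D.X) : Tl n x x := fun _ _ => rfl
lemma Tl.symm {n : ℕ} {x y : D.X} (h : Tl n x y) : Tl n y x := fun k hk => (h k hk).symm
lemma Tl.trans {n : ℕ} {x y z : D.X} (h : Tl n x y) (h' : Tl n y z) : Tl n x z :=
  fun k hk => (h k hk).trans (h' k hk)

variable (E : BratteliEmb B D)

/-- The tail condition of `δ^{1,0}` (prefix stripped). -/
def Dt (n : ℕ) (x y : D.X) : Prop :=
  (∀ k, n + 1 ≤ k → ∃ f : B.E k, x.1 k = E.xi1 k f ∧ y.1 k = E.xi0 k f) ∨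
  (∃ m : ℕ,
    (∀ k, n + 1 ≤ k → k ≤ n + 1 + m →
      ∃ f : B.E k, x.1 k = E.xi1 k f ∧ y.1 k = E.xi0 k f) ∧
    (∃ f : B.E (n + m + 2), x.1 (n + m + 2) = E.xi0 (n + m + 2) f ∧
      y.1 (n + m + 2) = E.xi1 (n + m + 2) f) ∧
    (∀ k, n + m + 2 < k → x.1 k = y.1 k)) ∨
  (∃ m : ℕ,
    (∀ k, n + 1 ≤ k → k ≤ n + 1 + m →
      ∃ f : B.E k, x.1 k = E.xi1 k f ∧ y.1 k = E.xi0 k f) ∧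
    (∀ f : B.E (n + m + 2), x.1 (n + m + 2) ≠ E.xi0 (n + m + 2) f ∧
      x.1 (n + m + 2) ≠ E.xi1 (n + m + 2) f) ∧
    (∀ k, n + m + 2 ≤ k → x.1 k = y.1 k))

/-- The `ξ⁰ ↔ ξ¹`-swapped embedding. -/
def swapE (E : BratteliEmb B D) : BratteliEmb B D where
  xiV := E.xiV
  xi0 := E.xi1
  xi1 := E.xi0
  xiV_inj := E.xiV_inj
  xi0_inj := E.xi1_inj
  xi1_inj := E.xi0_inj
  src_xi0 := E.src_xi1
  tgt_xi0 := E.tgt_xi1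
  src_xi1 := E.src_xi0
  tgt_xi1 := E.tgt_xi0
  disjoint01 := fun n f g h => E.disjoint01 n g f h.symm

lemma swapE_swapE (E : BratteliEmb B D) : swapE (swapE E) = E := rfl

/-- The run predicate: all coordinates in `[n+1, k)` lie in the image of `ξ¹`. -/
def Run (n : ℕ) (x : D.X) (k : ℕ) : Prop :=
  ∀ j, n + 1 ≤ j → j < k → ∃ f : B.E j, x.1 j = E.xi1 j f

lemma dt_first {n : ℕ} {x y : D.X} (h : Dt E n x y) :
    ∃ f : B.E (n + 1), x.1 (n + 1) = E.xi1 (n + 1) f ∧ y.1 (n + 1) = E.xi0 (n + 1) f := by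
  rcases h with h | ⟨m, hb, _⟩ | ⟨m, hb, _⟩
  · exact h (n + 1) le_rfl
  · exact hb (n + 1) le_rfl (by omega)
  · exact hb (n + 1) le_rfl (by omega)

/-- Determinacy: the tail of `y` is determined by the tail of `x`. -/
lemma dt_det {n : ℕ} {x y : D.X} (h : Dt E n x y) (k : ℕ) (hk : n + 1 ≤ k) :
    (Run E n x k → ∀ f, x.1 k = E.xi1 k f → y.1 k = E.xi0 k f) ∧
    (Run E n x k → ∀ f, x.1 k = E.xi0 k f → y.1 k = E.xi1 k f) ∧
    (Run E n x k → (∀ f, x.1 k ≠ E.xi0 k f ∧ x.1 k ≠ E.xi1 k f) → y.1 k = x.1 k) ∧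
    (¬ Run E n x k → y.1 k = x.1 k) := by
  rcases h with h | ⟨m, hb, ⟨g, hg1, hg2⟩, hafter⟩ | ⟨m, hb, hni, hafter⟩
  · have hrun : Run E n x k := fun j hj _ => ⟨(h j hj).choose, (h j hj).choose_spec.1⟩
    obtain ⟨f', hf1, hf2⟩ := h k hk
    refine ⟨fun _ f hf => ?_, fun _ f hf => ?_, fun _ hn => ?_, fun hr => absurd hrun hr⟩
    · rw [hf2]; congr 1; exact E.xi1_inj k (hf1.symm.trans hf)
    · exact absurd (hf.symm.trans hf1) (E.disjoint01 k f f')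
    · exact absurd hf1 (hn f').2
  · -- case 2 : swap at b = n + m + 2
    by_cases hcase : k ≤ n + 1 + m
    · have hrun : Run E n x k := fun j hj hjk =>
        ⟨(hb j hj (by omega)).choose, (hb j hj (by omega)).choose_spec.1⟩
      obtain ⟨f', hf1, hf2⟩ := hb k hk hcase
      refine ⟨fun _ f hf => ?_, fun _ f hf => ?_, fun _ hn => ?_, fun hr => absurd hrun hr⟩
      · rw [hf2]; congr 1; exact E.xi1_inj k (hf1.symm.trans hf)
      · exact absurd (hf.symm.trans hf1) (E.disjoint01 k f f')
      · exact absurd hf1 (hn f').2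
    · by_cases hcase2 : k = n + m + 2
      · subst hcase2
        have hrun : Run E n x (n + m + 2) := fun j hj hjk =>
          ⟨(hb j hj (by omega)).choose, (hb j hj (by omega)).choose_spec.1⟩
        refine ⟨fun _ f hf => ?_, fun _ f hf => ?_, fun _ hn => ?_, fun hr => absurd hrun hr⟩
        · exact absurd (hg1.symm.trans hf) (E.disjoint01 _ g f)
        · rw [hg2]; congr 1; exact E.xi0_inj _ (hg1.symm.trans hf)
        · exact absurd hg1 (hn g).1
      · -- k > n + m + 2
        have hgt : n + m + 2 < k := by omega
        have hnorun : ¬ Run E n x k := by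
          intro hr
          obtain ⟨f, hf⟩ := hr (n + m + 2) (by omega) hgt
          exact E.disjoint01 _ g f (hg1.symm.trans hf)
        exact ⟨fun hr => absurd hr hnorun, fun hr => absurd hr hnorun,
          fun hr => absurd hr hnorun, fun _ => (hafter k hgt).symm⟩
  · -- case 3 : non-image at b = n + m + 2
    by_cases hcase : k ≤ n + 1 + m
    · have hrun : Run E n x k := fun j hj hjk =>
        ⟨(hb j hj (by omega)).choose, (hb j hj (by omega)).choose_spec.1⟩
      obtain ⟨f', hf1, hf2⟩ := hb k hk hcase
      refine ⟨fun _ f hf => ?_, fun _ f hf => ?_, fun _ hn => ?_, fun hr => absurd hrun hr⟩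
      · rw [hf2]; congr 1; exact E.xi1_inj k (hf1.symm.trans hf)
      · exact absurd (hf.symm.trans hf1) (E.disjoint01 k f f')
      · exact absurd hf1 (hn f').2
    · by_cases hcase2 : k = n + m + 2
      · subst hcase2
        have hrun : Run E n x (n + m + 2) := fun j hj hjk =>
          ⟨(hb j hj (by omega)).choose, (hb j hj (by omega)).choose_spec.1⟩
        refine ⟨fun _ f hf => ?_, fun _ f hf => ?_, fun _ _ => ?_, fun hr => absurd hrun hr⟩
        · exact absurd hf (hni f).2
        · exact absurd hf (hni f).1
        · exact (hafter _ le_rfl).symm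
      · have hgt : n + m + 2 < k := by omega
        have hnorun : ¬ Run E n x k := by
          intro hr
          obtain ⟨f, hf⟩ := hr (n + m + 2) (by omega) hgt
          exact (hni f).2 hf
        exact ⟨fun hr => absurd hr hnorun, fun hr => absurd hr hnorun,
          fun hr => absurd hr hnorun, fun _ => (hafter k (le_of_lt hgt)).symm⟩

/-- Functionality: a given `x` has at most one `Dt`-partner tail. -/
lemma dt_func {n : ℕ} {x y z : D.X} (hy : Dt E n x y) (hz : Dt E n x z) : Tl n y z := by
  intro k hk
  obtain ⟨hy1, hy2, hy3, hy4⟩ := dt_det E hy k hk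
  obtain ⟨hz1, hz2, hz3, hz4⟩ := dt_det E hz k hk
  by_cases hrun : Run E n x k
  · by_cases h1 : ∃ f, x.1 k = E.xi1 k f
    · obtain ⟨f, hf⟩ := h1
      rw [hy1 hrun f hf, hz1 hrun f hf]
    · by_cases h0 : ∃ f, x.1 k = E.xi0 k f
      · obtain ⟨f, hf⟩ := h0
        rw [hy2 hrun f hf, hz2 hrun f hf]
      · push_neg at h1 h0
        rw [hy3 hrun fun f => ⟨h0 f, h1 f⟩, hz3 hrun fun f => ⟨h0 f, h1 f⟩]
  · rw [hy4 hrun, hz4 hrun]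

/-- `Dt` is reversed by swapping `ξ⁰` and `ξ¹`. -/
lemma dt_swap {n : ℕ} {x y : D.X} (h : Dt E n x y) : Dt (swapE E) n y x := by
  rcases h with h | ⟨m, hb, ⟨g, hg1, hg2⟩, hafter⟩ | ⟨m, hb, hni, hafter⟩
  · exact Or.inl fun k hk => by
      obtain ⟨f, h1, h2⟩ := h k hk; exact ⟨f, h2, h1⟩
  · refine Or.inr (Or.inl ⟨m, fun k hk hk' => ?_, ⟨g, hg2, hg1⟩, fun k hk => (hafter k hk).symm⟩)
    obtain ⟨f, h1, h2⟩ := hb k hk hk'; exact ⟨f, h2, h1⟩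
  · refine Or.inr (Or.inr ⟨m, fun k hk hk' => ?_, fun f => ?_, fun k hk => (hafter k hk).symm⟩)
    · obtain ⟨f, h1, h2⟩ := hb k hk hk'; exact ⟨f, h2, h1⟩
    · have := hafter _ le_rfl
      exact ⟨by rw [← this]; exact (hni f).2, by rw [← this]; exact (hni f).1⟩

/-- `Dt` only depends on the tails. -/
lemma dt_congr {n : ℕ} {x x' y y' : D.X} (hx : Tl n x x') (hy : Tl n y y')
    (h : Dt E n x y) : Dt E n x' y' := by
  rcases h with h | ⟨m, hb, ⟨g, hg1, hg2⟩, hafter⟩ | ⟨m, hb, hni, hafter⟩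
  · exact Or.inl fun k hk => by
      obtain ⟨f, h1, h2⟩ := h k hk
      exact ⟨f, (hx k hk).symm.trans h1, (hy k hk).symm.trans h2⟩
  · refine Or.inr (Or.inl ⟨m, fun k hk hk' => ?_,
      ⟨g, (hx _ (by omega)).symm.trans hg1, (hy _ (by omega)).symm.trans hg2⟩,
      fun k hk => ?_⟩)
    · obtain ⟨f, h1, h2⟩ := hb k hk hk'
      exact ⟨f, (hx k hk).symm.trans h1, (hy k hk).symm.trans h2⟩
    · rw [← hx k (by omega), ← hy k (by omega)]; exact hafter k hk
  · refine Or.inr (Or.inr ⟨m, fun k hk hk' => ?_, fun f => ?_, fun k hk => ?_⟩)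
    · obtain ⟨f, h1, h2⟩ := hb k hk hk'
      exact ⟨f, (hx k hk).symm.trans h1, (hy k hk).symm.trans h2⟩
    · rw [← hx _ (by omega)]; exact hni f
    · rw [← hx k (by omega), ← hy k (by omega)]; exact hafter k hk

end Stmt14Aux
namespace Stmt14Aux

variable {B D : Bratteli} (E : BratteliEmb B D)

lemma dt_delta {n : ℕ} {x y : D.X} (h : Dt E n x y) : (x, y) ∈ E.delta n x.1 y.1 := by
  rcases h with h | h | h
  · exact Or.inl (Or.inl ⟨fun k _ => ⟨rfl, rfl⟩, h⟩)
  · exact Or.inl (Or.inr ⟨fun k _ => ⟨rfl, rfl⟩, h⟩)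
  · exact Or.inr ⟨fun k _ => ⟨rfl, rfl⟩, h⟩

lemma delta_dt {n : ℕ} {p q : (k : ℕ) → D.E k} {x y : D.X}
    (h : (x, y) ∈ E.delta n p q) :
    (∀ k, k < n + 1 → x.1 k = p k ∧ y.1 k = q k) ∧ Dt E n x y := by
  rcases h with (⟨h1, h2⟩ | ⟨h1, h2⟩) | ⟨h1, h2⟩
  · exact ⟨h1, Or.inl h2⟩
  · exact ⟨h1, Or.inr (Or.inl h2)⟩
  · exact ⟨h1, Or.inr (Or.inr h2)⟩

/-- Characterization of membership in `R_n`. -/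
lemma mem_Rn_iff {n : ℕ} {x y : D.X} :
    (x, y) ∈ E.Rn n ↔
      D.tgt n (x.1 n) = D.tgt n (y.1 n) ∧
        (Tl n x y ∨ Dt E n x y ∨ Dt E n y x) := by
  constructor
  · rintro (h | h)
    · simp only [Set.mem_iUnion] at h
      obtain ⟨p, q, _, _, hpq, h1, h2⟩ := h
      have hx := (h1 n (by omega)).1
      have hy := (h1 n (by omega)).2
      exact ⟨by rw [hx, hy]; exact hpq, Or.inl h2⟩
    · simp only [Set.mem_iUnion] at h
      obtain ⟨p, q, _, _, hpq, _, h⟩ := h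
      rcases h with h | h
      · obtain ⟨h1, h2⟩ := delta_dt E h
        exact ⟨by rw [(h1 n (by omega)).1, (h1 n (by omega)).2]; exact hpq,
          Or.inr (Or.inl h2)⟩
      · obtain ⟨h1, h2⟩ := delta_dt E h
        exact ⟨by rw [(h1 n (by omega)).2, (h1 n (by omega)).1]; exact hpq.symm,
          Or.inr (Or.inr h2)⟩
  · rintro ⟨htgt, h | h | h⟩
    · left
      simp only [Set.mem_iUnion]
      exact ⟨x.1, y.1, fun k _ => x.2 k, fun k _ => y.2 k, htgt,
        fun k _ => ⟨rfl, rfl⟩, h⟩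
    · right
      simp only [Set.mem_iUnion]
      obtain ⟨f, hf1, _⟩ := dt_first E h
      refine ⟨x.1, y.1, fun k _ => x.2 k, fun k _ => y.2 k, htgt,
        ⟨B.src (n + 1) f, ?_⟩, Or.inl (dt_delta E h)⟩
      rw [x.2 n, hf1, E.src_xi1]
    · right
      simp only [Set.mem_iUnion]
      obtain ⟨f, hf1, _⟩ := dt_first E h
      refine ⟨y.1, x.1, fun k _ => y.2 k, fun k _ => x.2 k, htgt.symm,
        ⟨B.src (n + 1) f, ?_⟩, Or.inr (dt_delta E h)⟩
      rw [y.2 n, hf1, E.src_xi1]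

/-- The characterization is invariant under swapping the embedding. -/
lemma Rn_swap (n : ℕ) (x y : D.X) :
    (x, y) ∈ (swapE E).Rn n ↔ (x, y) ∈ E.Rn n := by
  rw [mem_Rn_iff, mem_Rn_iff]
  constructor
  · rintro ⟨h, h1 | h1 | h1⟩
    · exact ⟨h, Or.inl h1⟩
    · exact ⟨h, Or.inr (Or.inr (by simpa [swapE_swapE] using dt_swap (swapE E) h1))⟩
    · exact ⟨h, Or.inr (Or.inl (by simpa [swapE_swapE] using dt_swap (swapE E) h1))⟩
  · rintro ⟨h, h1 | h1 | h1⟩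
    · exact ⟨h, Or.inl h1⟩
    · exact ⟨h, Or.inr (Or.inr (dt_swap E h1))⟩
    · exact ⟨h, Or.inr (Or.inl (dt_swap E h1))⟩

end Stmt14Aux
namespace Stmt14Aux

open Classical in
/-- Flip an edge between the `ξ⁰`- and `ξ¹`-images; identity outside. -/
noncomputable def flipE {B D : Bratteli} (E : BratteliEmb B D) (k : ℕ) (e : D.E k) : D.E k :=
  if h : ∃ f, e = E.xi1 k f then E.xi0 k h.choose
  else if h : ∃ f, e = E.xi0 k f then E.xi1 k h.choose else e

variable {B D : Bratteli} (E : BratteliEmb B D)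

lemma flipE_xi1 (k : ℕ) (f : B.E k) : flipE E k (E.xi1 k f) = E.xi0 k f := by
  have h : ∃ g, E.xi1 k f = E.xi1 k g := ⟨f, rfl⟩
  rw [flipE, dif_pos h]
  congr 1
  exact (E.xi1_inj k h.choose_spec).symm

lemma flipE_xi0 (k : ℕ) (f : B.E k) : flipE E k (E.xi0 k f) = E.xi1 k f := by
  have h : ¬ ∃ g, E.xi0 k f = E.xi1 k g := by
    rintro ⟨g, hg⟩; exact E.disjoint01 k f g hg
  have h' : ∃ g, E.xi0 k f = E.xi0 k g := ⟨f, rfl⟩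
  rw [flipE, dif_neg h, dif_pos h']
  congr 1
  exact (E.xi0_inj k h'.choose_spec).symm

lemma flipE_nonim (k : ℕ) (e : D.E k)
    (h : ∀ f, e ≠ E.xi0 k f ∧ e ≠ E.xi1 k f) : flipE E k e = e := by
  rw [flipE, dif_neg, dif_neg]
  · rintro ⟨f, hf⟩; exact (h f).1 hf
  · rintro ⟨f, hf⟩; exact (h f).2 hf

lemma flipE_src (k : ℕ) (e : D.E k) : D.src k (flipE E k e) = D.src k e := by
  by_cases h1 : ∃ f, e = E.xi1 k f
  · obtain ⟨f, rfl⟩ := h1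
    rw [flipE_xi1, E.src_xi0, E.src_xi1]
  · by_cases h0 : ∃ f, e = E.xi0 k f
    · obtain ⟨f, rfl⟩ := h0
      rw [flipE_xi0, E.src_xi0, E.src_xi1]
    · push_neg at h1 h0
      rw [flipE_nonim E k e fun f => ⟨h0 f, h1 f⟩]

lemma flipE_tgt (k : ℕ) (e : D.E k) : D.tgt k (flipE E k e) = D.tgt k e := by
  by_cases h1 : ∃ f, e = E.xi1 k f
  · obtain ⟨f, rfl⟩ := h1
    rw [flipE_xi1, E.tgt_xi0, E.tgt_xi1]
  · by_cases h0 : ∃ f, e = E.xi0 k f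
    · obtain ⟨f, rfl⟩ := h0
      rw [flipE_xi0, E.tgt_xi0, E.tgt_xi1]
    · push_neg at h1 h0
      rw [flipE_nonim E k e fun f => ⟨h0 f, h1 f⟩]

open Classical in
/-- The flipped path: flip all coordinates within the initial `ξ¹`-run after `n`. -/
noncomputable def flip (n : ℕ) (x : D.X) : D.X :=
  ⟨fun k => if n + 1 ≤ k ∧ Run E n x k then flipE E k (x.1 k) else x.1 k, by
    intro k
    have h1 : D.tgt k (if n + 1 ≤ k ∧ Run E n x k then flipE E k (x.1 k) else x.1 k)
        = D.tgt k (x.1 k) := by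
      split
      · exact flipE_tgt E k _
      · rfl
    have h2 : D.src (k+1) (if n + 1 ≤ k+1 ∧ Run E n x (k+1) then flipE E (k+1) (x.1 (k+1))
        else x.1 (k+1)) = D.src (k+1) (x.1 (k+1)) := by
      split
      · exact flipE_src E (k+1) _
      · rfl
    rw [h1, h2]
    exact x.2 k⟩

lemma flip_of_run {n : ℕ} {x : D.X} {k : ℕ} (hk : n + 1 ≤ k) (hr : Run E n x k) :
    (flip E n x).1 k = flipE E k (x.1 k) := if_pos ⟨hk, hr⟩

lemma flip_of_not_run {n : ℕ} {x : D.X} {k : ℕ} (h : ¬ (n + 1 ≤ k ∧ Run E n x k)) :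
    (flip E n x).1 k = x.1 k := if_neg h

lemma flip_low {n : ℕ} {x : D.X} {k : ℕ} (hk : k ≤ n) :
    (flip E n x).1 k = x.1 k := if_neg (by omega)

/-- The flip of a `ξ¹`-starting path is a genuine `Dt`-partner. -/
lemma dt_flip {n : ℕ} {x : D.X} {f₀ : B.E (n + 1)}
    (hx : x.1 (n + 1) = E.xi1 (n + 1) f₀) : Dt E n x (flip E n x) := by
  by_cases hall : ∀ k, n + 1 ≤ k → ∃ f, x.1 k = E.xi1 k f
  · left
    intro k hk
    obtain ⟨f, hf⟩ := hall k hk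
    refine ⟨f, hf, ?_⟩
    rw [flip_of_run E hk fun j hj _ => hall j hj, hf, flipE_xi1]
  · push_neg at hall
    have hex : ∃ k, n + 1 ≤ k ∧ ∀ f, x.1 k ≠ E.xi1 k f := by
      obtain ⟨k, hk, h⟩ := hall
      exact ⟨k, hk, h⟩
    classical
    obtain ⟨b, ⟨hb1, hb2⟩, hmin⟩ :
        ∃ b, (n + 1 ≤ b ∧ ∀ f, x.1 b ≠ E.xi1 b f) ∧
          ∀ j, j < b → ¬ (n + 1 ≤ j ∧ ∀ f, x.1 j ≠ E.xi1 j f) :=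
      ⟨Nat.find hex, Nat.find_spec hex, fun j hj => Nat.find_min hex hj⟩
    have hlt : ∀ j, n + 1 ≤ j → j < b → ∃ f, x.1 j = E.xi1 j f := by
      intro j hj hjb
      have := hmin j hjb
      push_neg at this
      obtain ⟨f, hf⟩ := this hj
      exact ⟨f, hf⟩
    have hbne : b ≠ n + 1 := by
      rintro rfl
      exact hb2 f₀ hx
    have hb : n + 2 ≤ b := by omega
    obtain ⟨m, rfl⟩ : ∃ m, b = n + m + 2 := ⟨b - n - 2, by omega⟩
    have hrun_le : ∀ k, k ≤ n + m + 2 → Run E n x k :=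
      fun k hk j hj hjk => hlt j hj (by omega)
    have hblock : ∀ k, n + 1 ≤ k → k ≤ n + 1 + m →
        ∃ f : B.E k, x.1 k = E.xi1 k f ∧ (flip E n x).1 k = E.xi0 k f := by
      intro k hk hk'
      obtain ⟨f, hf⟩ := hlt k hk (by omega)
      refine ⟨f, hf, ?_⟩
      rw [flip_of_run E hk (hrun_le k (by omega)), hf, flipE_xi1]
    have hnotrun : ∀ k, n + m + 2 < k → ¬ (n + 1 ≤ k ∧ Run E n x k) := by
      rintro k hk ⟨-, hr⟩
      obtain ⟨f, hf⟩ := hr (n + m + 2) (by omega) hk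
      exact hb2 f hf
    by_cases h0 : ∃ g, x.1 (n + m + 2) = E.xi0 (n + m + 2) g
    · obtain ⟨g, hg⟩ := h0
      refine Or.inr (Or.inl ⟨m, hblock, ⟨g, hg, ?_⟩, fun k hk => ?_⟩)
      · rw [flip_of_run E (by omega) (hrun_le _ le_rfl), hg, flipE_xi0]
      · exact (flip_of_not_run E (hnotrun k hk)).symm
    · push_neg at h0
      refine Or.inr (Or.inr ⟨m, hblock, fun f => ⟨h0 f, hb2 f⟩, fun k hk => ?_⟩)
      rcases Nat.eq_or_lt_of_le hk with h | h
      · rw [flip_of_run E (by omega) (hrun_le k h.symm.le), ← h]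
        exact (flipE_nonim E _ _ fun f => ⟨h0 f, hb2 f⟩).symm
      · exact (flip_of_not_run E (hnotrun k h)).symm

end Stmt14Aux
namespace Stmt14Aux

variable {B D : Bratteli}

/-- Restrict an infinite path to a finite path. -/
def restrict (n : ℕ) (x : D.X) : D.FinPaths n :=
  ⟨fun k => x.1 k, fun k _ => x.2 k⟩

/-- Glue a finite path onto the tail of an infinite path. -/
def glue (n : ℕ) (p : D.FinPaths n) (z : D.X)
    (h : D.tgt n (p.1 ⟨n, Nat.lt_succ_self n⟩) = D.tgt n (z.1 n)) : D.X :=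
  ⟨fun k => if h' : k < n + 1 then p.1 ⟨k, h'⟩ else z.1 k, by
    intro k
    beta_reduce
    by_cases h1 : k + 1 < n + 1
    · have h0 : k < n + 1 := by omega
      rw [dif_pos h0, dif_pos h1]
      exact p.2 k h1
    · by_cases h2 : k < n + 1
      · have hk : k = n := by omega
        subst hk
        rw [dif_pos h2, dif_neg h1, ← z.2 k]
        exact h
      · rw [dif_neg h2, dif_neg h1]
        exact z.2 k⟩

lemma glue_lt (n : ℕ) (p : D.FinPaths n) (z : D.X) (h) {k : ℕ} (hk : k < n + 1) :
    (glue n p z h).1 k = p.1 ⟨k, hk⟩ := dif_pos hk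

lemma glue_ge (n : ℕ) (p : D.FinPaths n) (z : D.X) (h) {k : ℕ} (hk : n + 1 ≤ k) :
    (glue n p z h).1 k = z.1 k := dif_neg (by omega)

/-- Paths with a fixed tail and prescribed terminal vertex correspond to finite paths. -/
noncomputable def tailEquiv (n : ℕ) (x z : D.X)
    (hz : D.tgt n (z.1 n) = D.tgt n (x.1 n)) :
    {y : D.X // D.tgt n (y.1 n) = D.tgt n (x.1 n) ∧ Tl n z y} ≃
      {p : D.FinPaths n // D.tgt n (p.1 ⟨n, Nat.lt_succ_self n⟩) = D.tgt n (x.1 n)} where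
  toFun y := ⟨restrict n y.1, y.2.1⟩
  invFun p := ⟨glue n p.1 z (p.2.trans hz.symm),
    by rw [glue_lt n p.1 z _ (Nat.lt_succ_self n)]; exact p.2,
    fun k hk => (glue_ge n p.1 z _ hk).symm⟩
  left_inv y := Subtype.ext (Subtype.ext (funext fun k => by
    by_cases hk : k < n + 1
    · exact dif_pos hk
    · exact (dif_neg hk).trans (y.2.2 k (by omega))))
  right_inv p := Subtype.ext (Subtype.ext (funext fun k => dif_pos k.2))
  
instance (D : Bratteli) (n : ℕ) : Finite (D.FinPaths n) :=
  Subtype.finite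

end Stmt14Aux
namespace Stmt14Aux

variable {B D : Bratteli} (E : BratteliEmb B D)

lemma run_first (n : ℕ) (x : D.X) : Run E n x (n + 1) :=
  fun j hj hj' => absurd (lt_of_le_of_lt hj hj') (lt_irrefl _)

/-- Counting, case `x_{n+1} = ξ¹(f₀)`. -/
lemma card_case1 (n : ℕ) (x : D.X) (f₀ : B.E (n + 1))
    (hx : x.1 (n + 1) = E.xi1 (n + 1) f₀) :
    Nat.card { y : D.X // (x, y) ∈ E.Rn n } =
      2 * Nat.card { p : D.FinPaths n //
        D.tgt n (p.1 ⟨n, Nat.lt_succ_self n⟩) = D.tgt n (x.1 n) } := by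
  classical
  set x' := flip E n x with hx'def
  have hdt : Dt E n x x' := dt_flip E hx
  have hx'tgt : D.tgt n (x'.1 n) = D.tgt n (x.1 n) := by
    rw [hx'def, flip_low E (le_refl n)]
  have hx'1 : x'.1 (n + 1) = E.xi0 (n + 1) f₀ := by
    rw [hx'def, flip_of_run E le_rfl (run_first E n x), hx, flipE_xi1]
  have key : ∀ y : D.X, (x, y) ∈ E.Rn n ↔
      ((D.tgt n (y.1 n) = D.tgt n (x.1 n) ∧ Tl n x y) ∨
       (D.tgt n (y.1 n) = D.tgt n (x.1 n) ∧ Tl n x' y)) := by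
    intro y
    rw [mem_Rn_iff]
    constructor
    · rintro ⟨ht, h | h | h⟩
      · exact Or.inl ⟨ht.symm, h⟩
      · exact Or.inr ⟨ht.symm, dt_func E hdt h⟩
      · obtain ⟨f, _, hf2⟩ := dt_first E h
        exact absurd (hf2.symm.trans hx) (E.disjoint01 _ f f₀)
    · rintro (⟨ht, h⟩ | ⟨ht, h⟩)
      · exact ⟨ht.symm, Or.inl h⟩
      · exact ⟨ht.symm, Or.inr (Or.inl (dt_congr E (Tl.refl n x) h hdt))⟩
  have hdisj : Disjoint
      (fun y : D.X => D.tgt n (y.1 n) = D.tgt n (x.1 n) ∧ Tl n x y)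
      (fun y : D.X => D.tgt n (y.1 n) = D.tgt n (x.1 n) ∧ Tl n x' y) := by
    rw [Pi.disjoint_iff]
    intro y
    rw [Prop.disjoint_iff]
    rintro ⟨⟨-, h1⟩, ⟨-, h2⟩⟩
    have : x.1 (n + 1) = x'.1 (n + 1) :=
      (h1 (n + 1) le_rfl).trans (h2 (n + 1) le_rfl).symm
    rw [hx, hx'1] at this
    exact E.disjoint01 _ f₀ f₀ this.symm
  have e1 := tailEquiv n x x rfl
  have e2 := tailEquiv n x x' hx'tgt
  haveI : Finite { y : D.X // D.tgt n (y.1 n) = D.tgt n (x.1 n) ∧ Tl n x y } :=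
    Finite.of_equiv _ e1.symm
  haveI : Finite { y : D.X // D.tgt n (y.1 n) = D.tgt n (x.1 n) ∧ Tl n x' y } :=
    Finite.of_equiv _ e2.symm
  calc Nat.card { y : D.X // (x, y) ∈ E.Rn n }
      = Nat.card { y : D.X //
          (D.tgt n (y.1 n) = D.tgt n (x.1 n) ∧ Tl n x y) ∨
          (D.tgt n (y.1 n) = D.tgt n (x.1 n) ∧ Tl n x' y) } :=
        Nat.card_congr (Equiv.subtypeEquivRight key)
    _ = Nat.card ({ y : D.X // D.tgt n (y.1 n) = D.tgt n (x.1 n) ∧ Tl n x y } ⊕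
          { y : D.X // D.tgt n (y.1 n) = D.tgt n (x.1 n) ∧ Tl n x' y }) :=
        Nat.card_congr (subtypeOrEquiv _ _ hdisj)
    _ = Nat.card { y : D.X // D.tgt n (y.1 n) = D.tgt n (x.1 n) ∧ Tl n x y } +
        Nat.card { y : D.X // D.tgt n (y.1 n) = D.tgt n (x.1 n) ∧ Tl n x' y } :=
        Nat.card_sum
    _ = 2 * Nat.card { p : D.FinPaths n //
          D.tgt n (p.1 ⟨n, Nat.lt_succ_self n⟩) = D.tgt n (x.1 n) } := by
        rw [Nat.card_congr e1, Nat.card_congr e2]; ring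

/-- Counting, case `x_{n+1}` not in the images. -/
lemma card_case_none (n : ℕ) (x : D.X)
    (hx : ¬ ∃ f : B.E (n + 1),
      x.1 (n + 1) = E.xi0 (n + 1) f ∨ x.1 (n + 1) = E.xi1 (n + 1) f) :
    Nat.card { y : D.X // (x, y) ∈ E.Rn n } =
      Nat.card { p : D.FinPaths n //
        D.tgt n (p.1 ⟨n, Nat.lt_succ_self n⟩) = D.tgt n (x.1 n) } := by
  push_neg at hx
  have key : ∀ y : D.X, (x, y) ∈ E.Rn n ↔
      (D.tgt n (y.1 n) = D.tgt n (x.1 n) ∧ Tl n x y) := by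
    intro y
    rw [mem_Rn_iff]
    constructor
    · rintro ⟨ht, h | h | h⟩
      · exact ⟨ht.symm, h⟩
      · obtain ⟨f, hf1, -⟩ := dt_first E h
        exact absurd hf1 (hx f).2
      · obtain ⟨f, -, hf2⟩ := dt_first E h
        exact absurd hf2 (hx f).1
    · rintro ⟨ht, h⟩
      exact ⟨ht.symm, Or.inl h⟩
  exact Nat.card_congr ((Equiv.subtypeEquivRight key).trans (tailEquiv n x x rfl))

end Stmt14Aux

open Stmt14Aux


/-- `R_n` is an equivalence relation on `X_E`, and the `R_n`-class of `x`
has cardinality `2·#{p ∈ E_{0,n} : t(p) = t(x_n)}` if `x_{n+1} ∈ ξ⁰(F_{n+1}) ∪ ξ¹(F_{n+1})`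
and cardinality `#{p ∈ E_{0,n} : t(p) = t(x_n)}` otherwise. -/
theorem stmt14 (B D : Bratteli) (E : BratteliEmb B D) (n : ℕ) :
    (∀ x : D.X, (x, x) ∈ E.Rn n) ∧
    (∀ x y : D.X, (x, y) ∈ E.Rn n → (y, x) ∈ E.Rn n) ∧
    (∀ x y z : D.X, (x, y) ∈ E.Rn n → (y, z) ∈ E.Rn n → (x, z) ∈ E.Rn n) ∧
    (∀ x : D.X,
      ((∃ f : B.E (n + 1),
          x.1 (n + 1) = E.xi0 (n + 1) f ∨ x.1 (n + 1) = E.xi1 (n + 1) f) →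
        Nat.card { y : D.X // (x, y) ∈ E.Rn n } =
          2 * Nat.card { p : D.FinPaths n //
            D.tgt n (p.1 ⟨n, Nat.lt_succ_self n⟩) = D.tgt n (x.1 n) }) ∧
      ((¬ ∃ f : B.E (n + 1),
          x.1 (n + 1) = E.xi0 (n + 1) f ∨ x.1 (n + 1) = E.xi1 (n + 1) f) →
        Nat.card { y : D.X // (x, y) ∈ E.Rn n } =
          Nat.card { p : D.FinPaths n //
            D.tgt n (p.1 ⟨n, Nat.lt_succ_self n⟩) = D.tgt n (x.1 n) })) := by
  refine ⟨?_, ?_, ?_, ?_⟩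
  · intro x
    rw [mem_Rn_iff]
    exact ⟨rfl, Or.inl (Tl.refl n x)⟩
  · intro x y h
    rw [mem_Rn_iff] at h ⊢
    obtain ⟨ht, h | h | h⟩ := h
    · exact ⟨ht.symm, Or.inl (Tl.symm h)⟩
    · exact ⟨ht.symm, Or.inr (Or.inr h)⟩
    · exact ⟨ht.symm, Or.inr (Or.inl h)⟩
  · intro x y z hxy hyz
    rw [mem_Rn_iff] at hxy hyz ⊢
    obtain ⟨ht1, h1⟩ := hxy
    obtain ⟨ht2, h2⟩ := hyz
    refine ⟨ht1.trans ht2, ?_⟩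
    rcases h1 with h1 | h1 | h1 <;> rcases h2 with h2 | h2 | h2
    · exact Or.inl (h1.trans h2)
    · exact Or.inr (Or.inl (dt_congr E (Tl.symm h1) (Tl.refl n z) h2))
    · exact Or.inr (Or.inr (dt_congr E (Tl.refl n z) (Tl.symm h1) h2))
    · exact Or.inr (Or.inl (dt_congr E (Tl.refl n x) h2 h1))
    · obtain ⟨f, -, hf⟩ := dt_first E h1
      obtain ⟨g, hg, -⟩ := dt_first E h2
      exact absurd (hf.symm.trans hg) (E.disjoint01 _ f g)
    · exact Or.inl (dt_func (swapE E) (dt_swap E h1) (dt_swap E h2))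
    · exact Or.inr (Or.inr (dt_congr E h2 (Tl.refl n x) h1))
    · exact Or.inl (dt_func E h1 h2)
    · obtain ⟨f, hf, -⟩ := dt_first E h1
      obtain ⟨g, -, hg⟩ := dt_first E h2
      exact absurd (hg.symm.trans hf) (E.disjoint01 _ g f)
  · intro x
    constructor
    · rintro ⟨f, hf | hf⟩
      · have h := card_case1 (swapE E) n x f hf
        rw [← h]
        exact Nat.card_congr (Equiv.subtypeEquivRight fun y => (Rn_swap E n x y).symm)
      · exact card_case1 E n x f hf
    · exact card_case_none E n x
end

section
/- Let (V,E) and (W,F) be Bratteli diagrams with embeddings ξ, ξ⁰, ξ¹ as specified, let R = R_E ∪ ⋃_{n≥1} ⋃_{(p,q)∈I_n^W} (δ^{1,0}_{p,q} ∪ δ^{0,1}_{q,p}), and let L = ⋃_{n≥1} ⋃_{(p,q)∈I_n^W} λ^{1,0}_{p,q}. Then R \ R_E = L ∪ L⁻¹, and the sets s(L) = {x : ∃y, (x,y) ∈ L} and r(L) = {y : ∃x, (x,y) ∈ L} are disjoint. -/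
open MeasureTheory

/-- The set `L`, the union of all `λ^{1,0}_{p,q}` over `(p,q) ∈ I_n^W`, `n ≥ 1`. -/
def BratteliEmb.Lset {B D : Bratteli} (E : BratteliEmb B D) : Set (D.X × D.X) :=
  ⋃ (n : ℕ) (p : (k : ℕ) → D.E k) (q : (k : ℕ) → D.E k)
    (_ : D.IsPath (n + 1) p) (_ : D.IsPath (n + 1) q)
    (_ : D.tgt n (p n) = D.tgt n (q n))
    (_ : ∃ w : B.V (n + 1), D.tgt n (p n) = E.xiV (n + 1) w),
    E.lam n p q

section Helpers

variable {B D : Bratteli} (E : BratteliEmb B D)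

/-- Pairs which agree from coordinate `N+1` onward are tail equivalent. -/
lemma tail_mem_RE {x y : D.X} {N : ℕ} (h : ∀ k, N + 1 ≤ k → x.1 k = y.1 k) :
    (x, y) ∈ D.RE := by
  simp only [Bratteli.RE, Bratteli.beta, Set.mem_iUnion, Set.mem_setOf_eq]
  refine ⟨N, x.1, y.1, fun k _ => x.2 k, fun k _ => y.2 k, ?_, fun k _ => ⟨rfl, rfl⟩, h⟩
  rw [x.2 N, y.2 N, h (N + 1) le_rfl]

lemma RE_symm {x y : D.X} (h : (x, y) ∈ D.RE) : (y, x) ∈ D.RE := by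
  simp only [Bratteli.RE, Bratteli.beta, Set.mem_iUnion, Set.mem_setOf_eq] at h ⊢
  obtain ⟨n, p, q, hp, hq, ht, h1, h2⟩ := h
  exact ⟨n, q, p, hq, hp, ht.symm, fun k hk => ⟨(h1 k hk).2, (h1 k hk).1⟩,
    fun k hk => (h2 k hk).symm⟩

lemma lam_not_RE {n : ℕ} {p q : (k : ℕ) → D.E k} {z : D.X × D.X}
    (hz : z ∈ E.lam n p q) : z ∉ D.RE := by
  intro hRE
  simp only [Bratteli.RE, Bratteli.beta, Set.mem_iUnion, Set.mem_setOf_eq] at hRE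
  obtain ⟨N, p', q', _, _, _, _, heq⟩ := hRE
  obtain ⟨f, h1, h2⟩ := hz.2 (n + N + 1) (by omega)
  have h3 := heq (n + N + 1) (by omega)
  rw [h1, h2] at h3
  exact E.disjoint01 _ f f h3.symm

lemma delta_sdiff {n : ℕ} {p q : (k : ℕ) → D.E k} {z : D.X × D.X}
    (hz : z ∈ E.delta n p q) (hnot : z ∉ D.RE) : z ∈ E.lam n p q := by
  rcases hz with (hz | hz) | hz
  · exact hz
  · exfalso
    obtain ⟨-, m, -, -, htail⟩ := hz
    exact hnot (tail_mem_RE (N := n + m + 2) fun k hk => htail k (by omega))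
  · exfalso
    obtain ⟨-, m, -, -, htail⟩ := hz
    exact hnot (tail_mem_RE (N := n + m + 1) fun k hk => htail k (by omega))

end Helpers

/-- `R \ R_E = L ∪ L⁻¹`, and `s(L)` and `r(L)` are disjoint. -/
theorem stmt16 (B D : Bratteli) (E : BratteliEmb B D) :
    E.Rfull \ D.RE = E.Lset ∪ relInv E.Lset ∧
    Disjoint (Prod.fst '' E.Lset) (Prod.snd '' E.Lset) := by
  constructor
  · apply Set.Subset.antisymm
    · rintro z ⟨hzR, hzRE⟩
      rcases hzR with hzR | hzR
      · exact absurd hzR hzRE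
      simp only [Set.mem_iUnion] at hzR
      obtain ⟨n, p, q, hp, hq, ht, hw, hz⟩ := hzR
      rcases hz with hz | hz
      · left
        simp only [BratteliEmb.Lset, Set.mem_iUnion]
        exact ⟨n, p, q, hp, hq, ht, hw, delta_sdiff E hz hzRE⟩
      · right
        have hnot : (z.2, z.1) ∉ D.RE := fun h => hzRE (RE_symm h)
        have := delta_sdiff E hz hnot
        simp only [relInv, BratteliEmb.Lset, Set.mem_iUnion, Set.mem_setOf_eq]
        exact ⟨n, p, q, hp, hq, ht, hw, this⟩
    · rintro z (hz | hz)
      · simp only [BratteliEmb.Lset, Set.mem_iUnion] at hz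
        obtain ⟨n, p, q, hp, hq, ht, hw, hz⟩ := hz
        refine ⟨Or.inr ?_, lam_not_RE E hz⟩
        simp only [Set.mem_iUnion]
        exact ⟨n, p, q, hp, hq, ht, hw, Or.inl (Or.inl (Or.inl hz))⟩
      · simp only [relInv, BratteliEmb.Lset, Set.mem_iUnion, Set.mem_setOf_eq] at hz
        obtain ⟨n, p, q, hp, hq, ht, hw, hz⟩ := hz
        refine ⟨Or.inr ?_, fun h => lam_not_RE E hz (RE_symm h)⟩
        simp only [Set.mem_iUnion]
        exact ⟨n, p, q, hp, hq, ht, hw, Or.inr (Or.inl (Or.inl hz))⟩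
  · rw [Set.disjoint_left]
    rintro x ⟨z, hz, rfl⟩ ⟨z', hz', hz'x⟩
    simp only [BratteliEmb.Lset, Set.mem_iUnion] at hz hz'
    obtain ⟨n, p, q, -, -, -, -, hl⟩ := hz
    obtain ⟨n', p', q', -, -, -, -, hl'⟩ := hz'
    obtain ⟨f, h1, -⟩ := hl.2 (n + n' + 2) (by omega)
    obtain ⟨g, -, h2⟩ := hl'.2 (n + n' + 2) (by omega)
    rw [hz'x] at h2
    rw [h1] at h2
    exact E.disjoint01 _ g f h2.symm
end
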